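/- arXiv:1907.02854 — 9 statements merged into one kernel-verified Lean document; each statement's English description precedes it below -/
import Mathlib

section
/- Let p be a prime and q ≥ 2. Let Q(j,i) ∈ ℚ_p for j,i ∈ {1,…,q} satisfy |Q(j,i)|_p ≤ 1 and |Q(j,i) − Q(j,q)|_p ≤ 1/p for all i,j. Let z_1,…,z_{q−1} ∈ ℚ_p satisfy |z_j − 1|_p ≤ 1/p for all j. For i ∈ {1,…,q−1} set K_i = (1 + Σ_{j=1}^{q−1}(z_j − 1)Q(j,i)) / (1 + Σ_{j=1}^{q−1}(z_j − 1)Q(j,q)). Then the denominator is nonzero, |K_i|_p = 1, and |K_i − 1|_p ≤ (1/p)·max_{1≤j≤q−1} |z_j − 1|_p. -/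
open IsUltrametricDist in
private lemma norm_one_add_of_lt {p : ℕ} [Fact p.Prime] (x : ℚ_[p]) (h : ‖x‖ < 1) :
    ‖(1 : ℚ_[p]) + x‖ = 1 := by
  have h1 : ‖(1 : ℚ_[p])‖ = 1 := norm_one
  have hub : ‖(1 : ℚ_[p]) + x‖ ≤ 1 := by
    refine (norm_add_le_max _ _).trans ?_
    simp [h1, le_of_lt h]
  have hlb : (1 : ℝ) ≤ ‖(1 : ℚ_[p]) + x‖ := by
    have : ‖(1 : ℚ_[p])‖ ≤ max ‖(1:ℚ_[p]) + x‖ ‖x‖ := by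
      have := norm_add_le_max ((1:ℚ_[p]) + x) (-x)
      simpa using this
    rw [h1] at this
    rcases max_cases (‖(1:ℚ_[p]) + x‖) (‖x‖) with ⟨he, _⟩ | ⟨he, _⟩ <;> rw [he] at this
    · exact this
    · linarith
  linarith

/-- Key estimate in the proof of Theorem 4.2: with `q = n + 1 ≥ 2` states (the last index
`Fin.last n` playing the role of `q`), if `|Q(j,i)|_p ≤ 1`, `|Q(j,i) − Q(j,q)|_p ≤ 1/p` and
`|z_j − 1|_p ≤ 1/p`, then the quantity
`K_i = (1 + Σ_{j<q-1} (z_j − 1) Q(j,i)) / (1 + Σ_{j<q-1} (z_j − 1) Q(j,q))`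
has a nonzero denominator, `|K_i|_p = 1` and `|K_i − 1|_p ≤ (1/p) · max_j |z_j − 1|_p`. -/
theorem padic_Ki_norm_estimate
    (p : ℕ) [Fact p.Prime] (n : ℕ) (hn : 1 ≤ n)
    (Q : Fin (n + 1) → Fin (n + 1) → ℚ_[p])
    (hQ1 : ∀ j i, ‖Q j i‖ ≤ 1)
    (hQ2 : ∀ j i, ‖Q j i - Q j (Fin.last n)‖ ≤ 1 / (p : ℝ))
    (z : Fin n → ℚ_[p]) (hz : ∀ j, ‖z j - 1‖ ≤ 1 / (p : ℝ)) :
    (1 + ∑ j : Fin n, (z j - 1) * Q j.castSucc (Fin.last n)) ≠ 0 ∧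
    ∀ i : Fin n,
      ‖(1 + ∑ j : Fin n, (z j - 1) * Q j.castSucc i.castSucc) /
        (1 + ∑ j : Fin n, (z j - 1) * Q j.castSucc (Fin.last n))‖ = 1 ∧
      ‖(1 + ∑ j : Fin n, (z j - 1) * Q j.castSucc i.castSucc) /
        (1 + ∑ j : Fin n, (z j - 1) * Q j.castSucc (Fin.last n)) - 1‖ ≤
        (1 / (p : ℝ)) *
          Finset.univ.sup' (Finset.univ_nonempty_iff.mpr ⟨⟨0, hn⟩⟩)
            (fun j : Fin n => ‖z j - 1‖) := by
  have hp1 : (1 : ℝ) < (p : ℝ) := by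
    exact_mod_cast (Fact.out : p.Prime).one_lt
  have hinv : 1 / (p : ℝ) < 1 := by
    rw [div_lt_one (by linarith)]; exact hp1
  have hinv0 : 0 ≤ 1 / (p : ℝ) := by positivity
  -- bound on sums
  have hSum : ∀ i : Fin (n + 1),
      ‖∑ j : Fin n, (z j - 1) * Q j.castSucc i‖ ≤ 1 / (p : ℝ) := by
    intro i
    refine IsUltrametricDist.norm_sum_le_of_forall_le_of_nonneg hinv0 ?_
    intro j _
    calc ‖(z j - 1) * Q j.castSucc i‖ = ‖z j - 1‖ * ‖Q j.castSucc i‖ := norm_mul _ _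
    _ ≤ (1 / (p : ℝ)) * 1 := by
        exact mul_le_mul (hz j) (hQ1 _ _) (norm_nonneg _) hinv0
    _ = 1 / (p : ℝ) := by ring
  have hden : ∀ i : Fin (n + 1),
      ‖1 + ∑ j : Fin n, (z j - 1) * Q j.castSucc i‖ = 1 := fun i =>
    norm_one_add_of_lt _ (lt_of_le_of_lt (hSum i) hinv)
  have hden0 : (1 + ∑ j : Fin n, (z j - 1) * Q j.castSucc (Fin.last n)) ≠ 0 := by
    intro h
    have := hden (Fin.last n)
    rw [h] at this; simp at this
  refine ⟨hden0, fun i => ?_⟩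
  set D := 1 + ∑ j : Fin n, (z j - 1) * Q j.castSucc (Fin.last n) with hD
  set N := 1 + ∑ j : Fin n, (z j - 1) * Q j.castSucc i.castSucc with hN
  have hK : ‖N / D‖ = 1 := by
    rw [norm_div, hden i.castSucc, hden (Fin.last n)]; norm_num
  refine ⟨hK, ?_⟩
  set M := Finset.univ.sup' (Finset.univ_nonempty_iff.mpr ⟨⟨0, hn⟩⟩)
      (fun j : Fin n => ‖z j - 1‖) with hM
  have hM0 : 0 ≤ M := le_trans (norm_nonneg _)
    (Finset.le_sup' (fun j : Fin n => ‖z j - 1‖) (Finset.mem_univ ⟨0, hn⟩))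
  have hdiff : N / D - 1 = (N - D) / D := by
    field_simp
  have hND : ‖N - D‖ ≤ (1 / (p : ℝ)) * M := by
    have : N - D = ∑ j : Fin n,
        (z j - 1) * (Q j.castSucc i.castSucc - Q j.castSucc (Fin.last n)) := by
      rw [hN, hD, add_sub_add_left_eq_sub, ← Finset.sum_sub_distrib]
      exact Finset.sum_congr rfl fun j _ => by ring
    rw [this]
    refine IsUltrametricDist.norm_sum_le_of_forall_le_of_nonneg (by positivity) ?_
    intro j _
    calc ‖(z j - 1) * (Q j.castSucc i.castSucc - Q j.castSucc (Fin.last n))‖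
        = ‖z j - 1‖ * ‖Q j.castSucc i.castSucc - Q j.castSucc (Fin.last n)‖ := norm_mul _ _
    _ ≤ M * (1 / (p : ℝ)) := by
        exact mul_le_mul (Finset.le_sup' (fun j : Fin n => ‖z j - 1‖)
          (Finset.mem_univ j)) (hQ2 _ _) (norm_nonneg _) hM0
    _ = (1 / (p : ℝ)) * M := by ring
  calc ‖N / D - 1‖ = ‖N - D‖ / ‖D‖ := by rw [hdiff, norm_div]
  _ = ‖N - D‖ := by rw [hden (Fin.last n)]; simp
  _ ≤ (1 / (p : ℝ)) * M := hND
end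

section
/- Let T = (V, L) be a locally finite tree (a connected simple graph without cycles) in which every vertex has degree at least 2, let p be a prime and q ≥ 2. For each directed edge (v,x) let Q_{(v,x)}(j,i) ∈ ℚ_p (j,i ∈ {1,…,q}) satisfy |Q_{(v,x)}(j,i)|_p ≤ 1 and |Q_{(v,x)}(j,i) − Q_{(v,x)}(j,q)|_p ≤ 1/p for all i,j. Suppose z assigns to each directed edge (x,y) a vector (z_1(x,y), …, z_{q−1}(x,y)) with |z_i(x,y) − 1|_p ≤ 1/p for all i, such that for every directed edge (x,y) and every i ∈ {1,…,q−1}: z_i(x,y) = ∏_{v ∈ ∂{x}∖{y}} [1 + Σ_{j=1}^{q−1}(z_j(v,x) − 1)Q_{(v,x)}(j,i)] / [1 + Σ_{j=1}^{q−1}(z_j(v,x) − 1)Q_{(v,x)}(j,q)]. Then z_i(x,y) = 1 for every directed edge (x,y) and every i ∈ {1,…,q−1}. -/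
/-!
The boundary-law equation contracts `E_p` towards `1`. If `|z_j(v,x) - 1|_p ≤ δ` on all
edges, each factor `(1 + A) / (1 + B)` has a denominator of norm exactly `1`, so its distance to
`1` is `|A - B|_p = |Σ_j (z_j(v,x) - 1)(Q(j,i) - Q(j,q))|_p ≤ δ / p`; in an ultrametric field a
product of such factors stays within `δ / p` of `1`. Starting from `δ = 1`, this gives
`|z_i(x,y) - 1|_p ≤ p^{-k}` for every `k`.
-/

open IsUltrametricDist

section Ultrametric

variable {R : Type*} [SeminormedCommRing R] [NormOneClass R] [IsUltrametricDist R]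

lemma norm_mul_sub_one_le {a b : R} {ε : ℝ} (hε : ε ≤ 1) (ha : ‖a - 1‖ ≤ ε)
    (hb : ‖b - 1‖ ≤ ε) : ‖a * b - 1‖ ≤ ε := by
  have ha1 : ‖a‖ ≤ 1 := by
    simpa using (norm_add_one_le_max_norm_one (a - 1)).trans (max_le (ha.trans hε) le_rfl)
  calc ‖a * b - 1‖ = ‖a * (b - 1) + (a - 1)‖ := by ring_nf
    _ ≤ max ‖a * (b - 1)‖ ‖a - 1‖ := norm_add_le_max _ _
    _ ≤ ε := max_le ((norm_mul_le _ _).trans <| by nlinarith [norm_nonneg (b - 1)]) ha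

lemma norm_prod_sub_one_le {ι : Type*} (s : Finset ι) (f : ι → R) {ε : ℝ} (hε₀ : 0 ≤ ε)
    (hε : ε ≤ 1) (h : ∀ i ∈ s, ‖f i - 1‖ ≤ ε) : ‖∏ i ∈ s, f i - 1‖ ≤ ε :=
  Finset.prod_induction f (fun x => ‖x - 1‖ ≤ ε)
    (fun _ _ => norm_mul_sub_one_le hε) (by simpa using hε₀) h

end Ultrametric

section UltrametricField

variable {K : Type*} [NormedField K] [IsUltrametricDist K]

lemma norm_one_add_div_one_add_sub_one {a b : K} (hb : ‖b‖ < 1) :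
    ‖(1 + a) / (1 + b) - 1‖ = ‖a - b‖ := by
  have h1b : ‖1 + b‖ = 1 := by
    rw [norm_add_eq_max_of_norm_ne_norm (by simpa using hb.ne'), norm_one,
      max_eq_left hb.le]
  have h1b0 : 1 + b ≠ 0 := norm_ne_zero_iff.mp (by simp [h1b])
  rw [div_sub_one h1b0, norm_div, h1b, div_one]
  congr 1
  ring

lemma norm_ratio_sub_one_le {ι : Type*} (s : Finset ι) (w a b : ι → K) {c δ : ℝ}
    (hc₀ : 0 ≤ c) (hc : c < 1) (hδ : 0 ≤ δ) (hb : ∀ j ∈ s, ‖b j‖ ≤ 1)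
    (hab : ∀ j ∈ s, ‖a j - b j‖ ≤ c) (hwc : ∀ j ∈ s, ‖w j‖ ≤ c)
    (hwδ : ∀ j ∈ s, ‖w j‖ ≤ δ) :
    ‖(1 + ∑ j ∈ s, w j * a j) / (1 + ∑ j ∈ s, w j * b j) - 1‖ ≤ δ * c := by
  have hB : ‖∑ j ∈ s, w j * b j‖ < 1 := by
    refine lt_of_le_of_lt (norm_sum_le_of_forall_le_of_nonneg hc₀ fun j hj => ?_) hc
    rw [norm_mul]
    nlinarith [hwc j hj, hb j hj, norm_nonneg (w j), norm_nonneg (b j)]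
  rw [norm_one_add_div_one_add_sub_one hB, ← Finset.sum_sub_distrib]
  refine norm_sum_le_of_forall_le_of_nonneg (by positivity) fun j hj => ?_
  rw [← mul_sub, norm_mul]
  exact mul_le_mul (hwδ j hj) (hab j hj) (norm_nonneg _) hδ

end UltrametricField

/-- Theorem 4.2 (uniqueness): on a locally finite tree in which every vertex has degree at
least 2, with `q = n + 1 ≥ 2` spin values (the last index `Fin.last n` playing the role of
`q`), if the matrices `Q_{(v,x)}` satisfy `|Q_{(v,x)}(j,i)|_p ≤ 1` and
`|Q_{(v,x)}(j,i) − Q_{(v,x)}(j,q)|_p ≤ 1/p`, then any boundary law `z` with values in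
`E_p = {x : |x − 1|_p ≤ 1/p}`, i.e. any solution of
`z_i(x,y) = ∏_{v ∈ ∂{x}∖{y}} (1 + Σ_j (z_j(v,x) − 1) Q_{(v,x)}(j,i)) / (1 + Σ_j (z_j(v,x) − 1) Q_{(v,x)}(j,q))`,
is identically `1`. -/
theorem padic_boundary_law_unique
    {V : Type*} [DecidableEq V] (G : SimpleGraph V)
    [∀ v : V, Fintype (G.neighborSet v)]
    (hT : G.IsTree) (hdeg : ∀ v : V, 2 ≤ G.degree v)
    (p : ℕ) [Fact p.Prime] (n : ℕ) (hn : 1 ≤ n)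
    (Q : V → V → Fin (n + 1) → Fin (n + 1) → ℚ_[p])
    (hQ1 : ∀ v x : V, G.Adj v x → ∀ j i, ‖Q v x j i‖ ≤ 1)
    (hQ2 : ∀ v x : V, G.Adj v x → ∀ j i,
      ‖Q v x j i - Q v x j (Fin.last n)‖ ≤ 1 / (p : ℝ))
    (z : V → V → Fin n → ℚ_[p])
    (hz : ∀ x y : V, G.Adj x y → ∀ i, ‖z x y i - 1‖ ≤ 1 / (p : ℝ))
    (hbl : ∀ x y : V, G.Adj x y → ∀ i : Fin n,
      z x y i = ∏ v ∈ (G.neighborFinset x).erase y,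
        (1 + ∑ j : Fin n, (z v x j - 1) * Q v x j.castSucc i.castSucc) /
        (1 + ∑ j : Fin n, (z v x j - 1) * Q v x j.castSucc (Fin.last n))) :
    ∀ x y : V, G.Adj x y → ∀ i : Fin n, z x y i = 1 := by
  have hp : (1 : ℝ) < p := by exact_mod_cast (Fact.out : p.Prime).one_lt
  have hc₀ : (0 : ℝ) ≤ 1 / p := by positivity
  have hc : (1 : ℝ) / p < 1 := (div_lt_one (by linarith)).mpr hp
  have hcontract : ∀ k : ℕ, ∀ x y : V, G.Adj x y → ∀ i,
      ‖z x y i - 1‖ ≤ (1 / p : ℝ) ^ k := by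
    intro k
    induction k with
    | zero => exact fun x y hxy i => by simpa using (hz x y hxy i).trans hc.le
    | succ k ih =>
      intro x y hxy i
      rw [hbl x y hxy i, pow_succ]
      refine norm_prod_sub_one_le _ _ (by positivity)
        (mul_le_one₀ (pow_le_one₀ hc₀ hc.le) hc₀ hc.le) fun v hv => ?_
      have hvx : G.Adj v x :=
        G.adj_symm ((G.mem_neighborFinset x v).mp (Finset.mem_of_mem_erase hv))
      exact norm_ratio_sub_one_le _ _ _ _ hc₀ hc (by positivity)
        (fun j _ => hQ1 v x hvx _ _) (fun j _ => hQ2 v x hvx _ _)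
        (fun j _ => hz v x hvx j) (fun j _ => ih v x hvx j)
  intro x y hxy i
  have h0 : ‖z x y i - 1‖ ≤ 0 :=
    ge_of_tendsto' (tendsto_pow_atTop_nhds_zero_of_lt_one hc₀ hc) (hcontract · x y hxy i)
  exact sub_eq_zero.mp (norm_le_zero_iff.mp h0)
end

section
/- Let R be a commutative ring, α, β ∈ R and k ≥ 1 an integer. Then, as polynomials in z over R, z(1 − β + βz)^k − (1 − α + αz)^k = (z − 1) · (1 + Σ_{j=1}^k binom(k,j)·(zβ^j − α^j)·(z − 1)^{j−1}). -/
open Polynomial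

lemma aux_expand (R : Type*) [CommRing R] (γ : R) (k : ℕ) :
    (C (1 - γ) + C γ * X : R[X]) ^ k =
      ∑ j ∈ Finset.range (k + 1),
        C ((k.choose j : ℕ) : R) * C (γ ^ j) * (X - 1) ^ j := by
  have h : (C (1 - γ) + C γ * X : R[X]) = C γ * (X - 1) + 1 := by
    simp [map_sub, map_one]; ring
  rw [h, add_pow]
  refine Finset.sum_congr rfl fun j _ => ?_
  rw [mul_pow, one_pow, mul_one, ← C_pow, Polynomial.C_eq_natCast]
  ring

/-- The factorization `F(z) = (z − 1)·G(z)` from the proof of Theorem 5.1: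
`z(1 − β + βz)^k − (1 − α + αz)^k
  = (z − 1)·(1 + Σ_{j=1}^k C(k,j)(zβ^j − α^j)(z − 1)^{j−1})` in `R[z]`. -/
theorem poly_factorization_F_eq_z_sub_one_mul_G
    (R : Type*) [CommRing R] (α β : R) (k : ℕ) (hk : 1 ≤ k) :
    X * (C (1 - β) + C β * X) ^ k - (C (1 - α) + C α * X) ^ k =
      (X - 1) *
        (1 + ∑ j ∈ Finset.Icc 1 k,
          C ((k.choose j : ℕ) : R) * (X * C (β ^ j) - C (α ^ j)) * (X - 1) ^ (j - 1)) := by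
  rw [aux_expand, aux_expand]
  rw [Finset.mul_sum, ← Finset.sum_sub_distrib]
  have hsplit : Finset.range (k + 1) = insert 0 (Finset.Icc 1 k) := by
    ext x
    simp [Finset.mem_range, Finset.mem_Icc, Nat.lt_succ_iff, Nat.one_le_iff_ne_zero]
    omega
  rw [hsplit, Finset.sum_insert (by simp)]
  have h0 : X * (C ((k.choose 0 : ℕ) : R) * C (β ^ 0) * (X - 1) ^ 0) -
      C ((k.choose 0 : ℕ) : R) * C (α ^ 0) * (X - 1) ^ 0 = X - 1 := by
    simp
  rw [h0, mul_add, mul_one, Finset.mul_sum]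
  congr 1
  refine Finset.sum_congr rfl fun j hj => ?_
  have hj1 : 1 ≤ j := (Finset.mem_Icc.mp hj).1
  have : (X - 1 : R[X]) ^ j = (X - 1) * (X - 1) ^ (j - 1) := by
    rw [← pow_succ']
    congr 1
    omega
  rw [this]
  ring
end

section
/- Let p be a prime, k ≥ 1 an integer, α, β ∈ ℤ_p (p-adic integers), and γ ∈ {0,1,2,…} such that, in ℤ_p: k(β−α) + 1 ≡ 0 (mod p^{2γ+1}), kβ + (k(k−1)/2)(β² − α²) ≡ 0 (mod p^γ), and kβ + (k(k−1)/2)(β² − α²) ≢ 0 (mod p^{γ+1}). Then there exists a ∈ ℤ_p with a ≡ 1 (mod p^{γ+1}) such that 1 + Σ_{j=1}^k binom(k,j)·(aβ^j − α^j)·(a − 1)^{j−1} = 0; consequently a(1 − β + βa)^k = (1 − α + αa)^k and |a − 1|_p ≤ 1/p. -/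
/-!
Write `G` for the polynomial in the conclusion, so that
`(X - 1) G = X (1 - β + β X)^k - (1 - α + α X)^k`. Then `G(1) = k(β - α) + 1` and
`G'(1) = kβ + binom(k,2)(β² - α²)`, so the hypotheses say `|G'(1)| = p^{-γ}` and
`|G(1)| ≤ p^{-2γ-1} < |G'(1)|²`. Hensel's lemma then gives a root `a` with
`|a - 1| < |G'(1)| = p^{-γ}`.
-/

open Polynomial Finset

section BinomialQuotient

variable {R : Type*} [CommRing R]

theorem one_add_mul_pow_eq (k : ℕ) (x t : R) :
    (1 + x * t) ^ k = 1 + t * ∑ j ∈ Icc 1 k, (k.choose j : R) * x ^ j * t ^ (j - 1) := by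
  rw [add_comm, add_pow, sum_range_eq_add_Ico _ (by omega : 0 < k + 1), Ico_add_one_right_eq_Icc,
    mul_sum]
  simp only [pow_zero, one_pow, mul_one, Nat.choose_zero_right, Nat.cast_one]
  congr 1
  refine sum_congr rfl fun j hj => ?_
  obtain ⟨i, rfl⟩ := Nat.exists_eq_add_of_le' (mem_Icc.1 hj).1
  rw [Nat.add_sub_cancel]
  ring

/-- `(X (1 - β + β X)^k - (1 - α + α X)^k) / (X - 1)`, see `mul_pow_sub_pow_eq_sub_one_mul_eval`. -/
noncomputable def binomQuotPoly (k : ℕ) (α β : R) : R[X] :=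
  1 + ∑ j ∈ Icc 1 k, C (k.choose j : R) * (C (β ^ j) * X - C (α ^ j)) * (X - 1) ^ (j - 1)

theorem eval_binomQuotPoly (k : ℕ) (α β x : R) :
    (binomQuotPoly k α β).eval x =
      1 + ∑ j ∈ Icc 1 k, (k.choose j : R) * (x * β ^ j - α ^ j) * (x - 1) ^ (j - 1) := by
  simp only [binomQuotPoly, eval_add, eval_one, eval_finsetSum, eval_mul, eval_pow, eval_sub,
    eval_C, eval_X, mul_comm (β ^ _) x]

theorem mul_pow_sub_pow_eq_sub_one_mul_eval (k : ℕ) (α β a : R) :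
    a * (1 - β + β * a) ^ k - (1 - α + α * a) ^ k = (a - 1) * (binomQuotPoly k α β).eval a := by
  have h : ∀ x : R, 1 - x + x * a = 1 + x * (a - 1) := fun x => by ring
  have hsum : ∑ j ∈ Icc 1 k, (k.choose j : R) * (a * β ^ j - α ^ j) * (a - 1) ^ (j - 1) =
      a * ∑ j ∈ Icc 1 k, (k.choose j : R) * β ^ j * (a - 1) ^ (j - 1) -
        ∑ j ∈ Icc 1 k, (k.choose j : R) * α ^ j * (a - 1) ^ (j - 1) := by
    rw [mul_sum, ← sum_sub_distrib]
    exact sum_congr rfl fun _ _ => by ring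
  rw [h, h, one_add_mul_pow_eq, one_add_mul_pow_eq, eval_binomQuotPoly, hsum]
  ring

theorem binomQuotPoly_eval_one (k : ℕ) (α β : R) :
    (binomQuotPoly k α β).eval 1 = k * (β - α) + 1 := by
  rw [eval_binomQuotPoly, add_comm, sum_eq_single 1]
  · simp
  · intro j hj hj1
    rw [sub_self, zero_pow (by grind), mul_zero]
  · intro h1
    simp_all

theorem derivative_term_eval_one (c b d : R) {j : ℕ} (hj : j ≠ 0) :
    (derivative (C c * (C b * X - C d) * (X - 1) ^ (j - 1))).eval 1 =
      (if j = 1 then c * b else 0) + (if j = 2 then c * (b - d) else 0) := by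
  match j, hj with
  | 1, _ => simp
  | 2, _ => simp [derivative_mul]
  | n + 3, _ => simp [derivative_mul, derivative_pow]

theorem derivative_binomQuotPoly_eval_one (k : ℕ) (α β : R) :
    (derivative (binomQuotPoly k α β)).eval 1 = k * β + (k.choose 2 : R) * (β ^ 2 - α ^ 2) := by
  rw [binomQuotPoly, derivative_add, derivative_one, zero_add, derivative_sum, eval_finsetSum,
    sum_congr rfl fun j hj => derivative_term_eval_one _ _ _ (by grind), sum_add_distrib,
    sum_ite_eq', sum_ite_eq']
  simp only [mem_Icc]
  split_ifs with h1 h2 h2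
  · simp
  · simp [Nat.choose_eq_zero_of_lt (by omega : k < 2)]
  · omega
  · obtain rfl : k = 0 := by omega
    simp

end BinomialQuotient

namespace PadicInt

variable {p : ℕ} [Fact p.Prime]

theorem pow_dvd_iff_norm_le {x : ℤ_[p]} {n : ℕ} :
    (p : ℤ_[p]) ^ n ∣ x ↔ ‖x‖ ≤ (p : ℝ) ^ (-n : ℤ) := by
  rw [norm_le_pow_iff_mem_span_pow, Ideal.mem_span_singleton]

theorem pow_succ_dvd_iff_norm_lt {x : ℤ_[p]} {n : ℕ} :
    (p : ℤ_[p]) ^ (n + 1) ∣ x ↔ ‖x‖ < (p : ℝ) ^ (-n : ℤ) := by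
  rw [pow_dvd_iff_norm_le, norm_lt_pow_iff_norm_le_pow_sub_one]
  push_cast
  ring_nf

theorem exists_root_pow_succ_dvd_sub_of_pow_dvd {F : ℤ_[p][X]} {a : ℤ_[p]} {γ : ℕ}
    (hF : (p : ℤ_[p]) ^ (2 * γ + 1) ∣ F.eval a) (hF' : (p : ℤ_[p]) ^ γ ∣ F.derivative.eval a)
    (hF'' : ¬ (p : ℤ_[p]) ^ (γ + 1) ∣ F.derivative.eval a) :
    ∃ z : ℤ_[p], F.eval z = 0 ∧ (p : ℤ_[p]) ^ (γ + 1) ∣ z - a := by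
  rw [pow_succ_dvd_iff_norm_lt, not_lt] at hF''
  rw [pow_succ_dvd_iff_norm_lt] at hF
  rw [pow_dvd_iff_norm_le] at hF'
  have hnorm : ‖F.aeval a‖ < ‖F.derivative.aeval a‖ ^ 2 := by
    simp only [coe_aeval_eq_eval]
    calc ‖F.eval a‖ < (p : ℝ) ^ (-(2 * γ : ℕ) : ℤ) := hF
      _ = ((p : ℝ) ^ (-γ : ℤ)) ^ 2 := by rw [← zpow_natCast, ← zpow_mul]; push_cast; ring_nf
      _ ≤ ‖F.derivative.eval a‖ ^ 2 := by gcongr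
  obtain ⟨z, hz, hza, -⟩ := hensels_lemma hnorm
  rw [coe_aeval_eq_eval] at hz hza
  exact ⟨z, hz, pow_succ_dvd_iff_norm_lt.2 (hza.trans_le hF')⟩

theorem norm_le_inv_of_dvd {x : ℤ_[p]} (hx : (p : ℤ_[p]) ∣ x) : ‖x‖ ≤ 1 / (p : ℝ) := by
  simpa using pow_dvd_iff_norm_le.1 ((pow_one (p : ℤ_[p])).symm ▸ hx : (p : ℤ_[p]) ^ 1 ∣ x)

end PadicInt

theorem padic_hensel_nontrivial_root_general
    (p : ℕ) [Fact p.Prime] (k : ℕ) (α β : ℤ_[p]) (γ : ℕ)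
    (h1 : (p : ℤ_[p]) ^ (2 * γ + 1) ∣ ((k : ℤ_[p]) * (β - α) + 1))
    (h2 : (p : ℤ_[p]) ^ γ ∣
      ((k : ℤ_[p]) * β + ((k * (k - 1) / 2 : ℕ) : ℤ_[p]) * (β ^ 2 - α ^ 2)))
    (h3 : ¬ (p : ℤ_[p]) ^ (γ + 1) ∣
      ((k : ℤ_[p]) * β + ((k * (k - 1) / 2 : ℕ) : ℤ_[p]) * (β ^ 2 - α ^ 2))) :
    ∃ a : ℤ_[p],
      (p : ℤ_[p]) ^ (γ + 1) ∣ (a - 1) ∧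
      1 + ∑ j ∈ Finset.Icc 1 k,
        ((k.choose j : ℕ) : ℤ_[p]) * (a * β ^ j - α ^ j) * (a - 1) ^ (j - 1) = 0 ∧
      a * (1 - β + β * a) ^ k = (1 - α + α * a) ^ k ∧
      ‖a - 1‖ ≤ 1 / (p : ℝ) := by
  rw [← binomQuotPoly_eval_one k α β] at h1
  rw [← Nat.choose_two_right, ← derivative_binomQuotPoly_eval_one] at h2 h3
  obtain ⟨a, ha, hdvd⟩ := PadicInt.exists_root_pow_succ_dvd_sub_of_pow_dvd h1 h2 h3
  refine ⟨a, hdvd, (eval_binomQuotPoly k α β a).symm.trans ha, ?_,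
    PadicInt.norm_le_inv_of_dvd ((dvd_pow_self _ γ.succ_ne_zero).trans hdvd)⟩
  rw [← sub_eq_zero, mul_pow_sub_pow_eq_sub_one_mul_eval, ha, mul_zero]

/-- Theorem 5.1 (via Hensel's lemma): if `α, β ∈ ℤ_p`, `k ≥ 1`, and `γ ≥ 0` satisfy
`k(β−α)+1 ≡ 0 (mod p^{2γ+1})`, `kβ + (k(k−1)/2)(β²−α²) ≡ 0 (mod p^γ)` and
`kβ + (k(k−1)/2)(β²−α²) ≢ 0 (mod p^{γ+1})`, then there is `a ∈ ℤ_p` with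
`a ≡ 1 (mod p^{γ+1})`, `G(a) = 0` (hence `a(1−β+βa)^k = (1−α+αa)^k`) and `|a−1|_p ≤ 1/p`. -/
theorem padic_hensel_nontrivial_root
    (p : ℕ) [Fact p.Prime] (k : ℕ) (hk : 1 ≤ k) (α β : ℤ_[p]) (γ : ℕ)
    (h1 : (p : ℤ_[p]) ^ (2 * γ + 1) ∣ ((k : ℤ_[p]) * (β - α) + 1))
    (h2 : (p : ℤ_[p]) ^ γ ∣
      ((k : ℤ_[p]) * β + ((k * (k - 1) / 2 : ℕ) : ℤ_[p]) * (β ^ 2 - α ^ 2)))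
    (h3 : ¬ (p : ℤ_[p]) ^ (γ + 1) ∣
      ((k : ℤ_[p]) * β + ((k * (k - 1) / 2 : ℕ) : ℤ_[p]) * (β ^ 2 - α ^ 2))) :
    ∃ a : ℤ_[p],
      (p : ℤ_[p]) ^ (γ + 1) ∣ (a - 1) ∧
      1 + ∑ j ∈ Finset.Icc 1 k,
        ((k.choose j : ℕ) : ℤ_[p]) * (a * β ^ j - α ^ j) * (a - 1) ^ (j - 1) = 0 ∧
      a * (1 - β + β * a) ^ k = (1 - α + α * a) ^ k ∧
      ‖a - 1‖ ≤ 1 / (p : ℝ) :=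
  padic_hensel_nontrivial_root_general p k α β γ h1 h2 h3
end

section
/- In ℚ_3 there exists s with s² = 13 and |s − 1|_3 ≤ 1/3; for this s, the elements z_1 = (7 − s)/18 and z_2 = (7 + s)/18 satisfy: z_1 and z_2 are the two roots of the equation z(1 − 3 + 3z)² = (1 − 2 + 2z)² other than z = 1 (taking k = 2, α = 2, β = 3), |z_1|_3 = 1, |z_1 − 1|_3 = 1/3 (so z_1 ∈ E_3), and |z_2|_3 = 9 (so z_2 ∉ E_3). -/
/-!
Hensel's lemma applied to `X² - 13` at `16` (note `16² - 13 = 3⁵`) gives a square root `s` of `13`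
in `ℚ_3` with `|s - 16|_3 = 3⁻⁵`. Since the cubic factors as
`z(3z - 2)² - (2z - 1)² = (z - 1)(9z² - 7z + 1)` and `9z² - 7z + 1` has discriminant `13`, its roots
other than `1` are `(7 ∓ s)/18`. Each of the norms is that of an integer perturbed by `s - 16`,
which is too small to change it in the ultrametric `ℚ_3`: `7 - s = -9 - (s - 16)`,
`(7 - s)/18 - 1 = -(27 + (s - 16))/18`, `7 + s = 23 + (s - 16)`, `s - 1 = 15 + (s - 16)`.
-/

open Polynomial

theorem IsUltrametricDist.norm_add_eq_left_of_norm_lt {E : Type*} [SeminormedAddGroup E]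
    [IsUltrametricDist E] {x y : E} (h : ‖y‖ < ‖x‖) : ‖x + y‖ = ‖x‖ := by
  rw [norm_add_eq_max_of_norm_ne_norm h.ne', max_eq_left h.le]

theorem Padic.norm_ofNat_eq_zpow {p : ℕ} [Fact p.Prime] (n : ℕ) [n.AtLeastTwo] (k m : ℕ)
    (h : n = p ^ k * m) (hm : p.Coprime m) :
    ‖(OfNat.ofNat n : ℚ_[p])‖ = (p : ℝ) ^ (-k : ℤ) := by
  have hn : (OfNat.ofNat n : ℚ_[p]) = (p : ℚ_[p]) ^ k * (m : ℚ_[p]) := by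
    rw [← Nat.cast_ofNat (R := ℚ_[p]), ← Nat.cast_pow, ← Nat.cast_mul, ← h]
    rfl
  rw [hn, norm_mul, Padic.norm_p_pow, Padic.norm_natCast_eq_one_iff.mpr hm, mul_one]

theorem PadicInt.exists_sq_eq_and_norm_sub_eq {p : ℕ} [Fact p.Prime] {c a : ℤ_[p]}
    (h : ‖a ^ 2 - c‖ < ‖2 * a‖ ^ 2) :
    ∃ s : ℤ_[p], s ^ 2 = c ∧ ‖s - a‖ = ‖a ^ 2 - c‖ / ‖2 * a‖ := by
  have heval : (X ^ 2 - C c).aeval a = a ^ 2 - c := by simp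
  have hderiv : (X ^ 2 - C c).derivative.aeval a = 2 * a := by
    simp only [derivative_sub, derivative_X_sq, derivative_C, sub_zero, map_mul, aeval_C, aeval_X,
      Algebra.algebraMap_self, RingHom.id_apply]
  obtain ⟨s, hs, hsa, -, -⟩ := hensels_lemma (F := X ^ 2 - C c) (by rwa [heval, hderiv])
  rw [hderiv] at hsa
  have hs : s ^ 2 = c := by simpa [sub_eq_zero] using hs
  -- Hensel only gives `‖s - a‖ < ‖2a‖`; the exact value comes from `(s - a)(s + a) = c - a²`.
  have hsum : ‖s + a‖ = ‖2 * a‖ := by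
    rw [show s + a = 2 * a + (s - a) by ring,
      IsUltrametricDist.norm_add_eq_left_of_norm_lt hsa]
  have h2a : ‖2 * a‖ ≠ 0 := by
    intro h0
    rw [h0] at h
    linarith [norm_nonneg (a ^ 2 - c)]
  have hprod : (s - a) * (s + a) = -(a ^ 2 - c) := by rw [← hs]; ring
  refine ⟨s, hs, ?_⟩
  rw [← norm_neg (a ^ 2 - c), ← hprod, norm_mul, hsum, mul_div_cancel_right₀ _ h2a]

theorem Padic.exists_sq_eq_thirteen_and_norm_sub_sixteen :
    ∃ s : ℚ_[3], s ^ 2 = 13 ∧ ‖s - 16‖ = 1 / 243 := by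
  have h243 : ‖(16 : ℤ_[3]) ^ 2 - 13‖ = 1 / 243 := by
    rw [show (16 : ℤ_[3]) ^ 2 - 13 = (3 : ℕ) ^ 5 by norm_num, PadicInt.norm_p_pow]
    norm_num
  have h32 : ‖(2 * 16 : ℤ_[3])‖ = 1 := by
    rw [show (2 * 16 : ℤ_[3]) = (32 : ℕ) by norm_num]
    exact PadicInt.norm_natCast_eq_one_iff.mpr (by norm_num)
  obtain ⟨s, hs, hs16⟩ := PadicInt.exists_sq_eq_and_norm_sub_eq (by rw [h243, h32]; norm_num)
  rw [h243, h32, div_one] at hs16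
  exact ⟨s, by exact_mod_cast congrArg ((↑) : ℤ_[3] → ℚ_[3]) hs, by exact_mod_cast hs16⟩

theorem mul_sq_eq_sq_iff_of_sq_eq_thirteen {K : Type*} [Field K] [CharZero K] {s : K}
    (hs : s ^ 2 = 13) (z : K) :
    z * (1 - 3 + 3 * z) ^ 2 = (1 - 2 + 2 * z) ^ 2 ↔
      z = 1 ∨ z = (7 - s) / 18 ∨ z = (7 + s) / 18 := by
  have hfactor : z * (1 - 3 + 3 * z) ^ 2 - (1 - 2 + 2 * z) ^ 2 =
      (z - 1) * (9 * (z * z) + (-7) * z + 1) := by ring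
  have hdiscrim : discrim (9 : K) (-7) 1 = -s * -s := by
    rw [discrim, neg_mul_neg, ← sq, hs]; norm_num
  rw [← sub_eq_zero, hfactor, mul_eq_zero, sub_eq_zero,
    quadratic_eq_zero_iff (by norm_num) hdiscrim]
  norm_num [sub_eq_add_neg]

theorem Padic.norms_of_norm_sub_sixteen {s : ℚ_[3]} (hs16 : ‖s - 16‖ = 1 / 243) :
    ‖s - 1‖ = 1 / 3 ∧ ‖(7 - s) / 18‖ = 1 ∧ ‖(7 - s) / 18 - 1‖ = 1 / 3 ∧ ‖(7 + s) / 18‖ = 9 := by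
  have hnear : ∀ c : ℚ_[3], 1 / 243 < ‖c‖ → ‖c + (s - 16)‖ = ‖c‖ := fun c hc =>
    IsUltrametricDist.norm_add_eq_left_of_norm_lt (hs16 ▸ hc)
  have h9 : ‖(9 : ℚ_[3])‖ = 1 / 9 := by
    rw [Padic.norm_ofNat_eq_zpow (p := 3) 9 2 1 rfl (by norm_num)]; norm_num
  have h15 : ‖(15 : ℚ_[3])‖ = 1 / 3 := by
    rw [Padic.norm_ofNat_eq_zpow (p := 3) 15 1 5 rfl (by norm_num)]; norm_num
  have h18 : ‖(18 : ℚ_[3])‖ = 1 / 9 := by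
    rw [Padic.norm_ofNat_eq_zpow (p := 3) 18 2 2 rfl (by norm_num)]; norm_num
  have h23 : ‖(23 : ℚ_[3])‖ = 1 := by
    rw [Padic.norm_ofNat_eq_zpow (p := 3) 23 0 23 rfl (by norm_num)]; norm_num
  have h27 : ‖(27 : ℚ_[3])‖ = 1 / 27 := by
    rw [Padic.norm_ofNat_eq_zpow (p := 3) 27 3 1 rfl (by norm_num)]; norm_num
  refine ⟨?_, ?_, ?_, ?_⟩
  · rw [show s - 1 = 15 + (s - 16) by ring, hnear _ (by norm_num [h15]), h15]
  · rw [show 7 - s = -(9 + (s - 16)) by ring, norm_div, norm_neg,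
      hnear _ (by norm_num [h9]), h9, h18, div_self (by norm_num)]
  · rw [show (7 - s) / 18 - 1 = -(27 + (s - 16)) / 18 by ring, norm_div, norm_neg,
      hnear _ (by norm_num [h27]), h27, h18]
    norm_num
  · rw [show 7 + s = 23 + (s - 16) by ring, norm_div, hnear _ (by norm_num [h23]), h23, h18]
    norm_num

/-- Example 5.3 b) (`k = 2`, `p = 3`, `α = 2`, `β = 3`): there is `s ∈ ℚ_3` with `s² = 13`
and `|s − 1|_3 ≤ 1/3`; the elements `z₁ = (7 − s)/18` and `z₂ = (7 + s)/18` are exactly the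
roots of `z(1 − 3 + 3z)² = (1 − 2 + 2z)²` other than `z = 1`, with `|z₁|_3 = 1`,
`|z₁ − 1|_3 = 1/3` (so `z₁ ∈ E_3`) and `|z₂|_3 = 9` (so `z₂ ∉ E_3`). -/
theorem padic_example_k_two_alpha_two_beta_three :
    ∃ s : ℚ_[3], s ^ 2 = 13 ∧ ‖s - 1‖ ≤ 1 / 3 ∧
      (∀ z : ℚ_[3],
        z * (1 - 3 + 3 * z) ^ 2 = (1 - 2 + 2 * z) ^ 2 ↔
          (z = 1 ∨ z = (7 - s) / 18 ∨ z = (7 + s) / 18)) ∧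
      (7 - s) / 18 ≠ 1 ∧ (7 + s) / 18 ≠ 1 ∧
      ‖(7 - s) / 18‖ = 1 ∧ ‖(7 - s) / 18 - 1‖ = 1 / 3 ∧ ‖(7 + s) / 18‖ = 9 := by
  obtain ⟨s, hs, hs16⟩ := Padic.exists_sq_eq_thirteen_and_norm_sub_sixteen
  obtain ⟨hs₁, hz₁, hz₁_sub_one, hz₂⟩ := Padic.norms_of_norm_sub_sixteen hs16
  refine ⟨s, hs, hs₁.le, mul_sq_eq_sq_iff_of_sq_eq_thirteen hs, ?_, ?_, hz₁, hz₁_sub_one, hz₂⟩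
  · intro h
    norm_num [h] at hz₁_sub_one
  · intro h
    norm_num [h] at hz₂
end

section
/- In ℚ_3 there exists t with t² = 61, and the elements z_1 = (359 − 39t)/722 and z_2 = (359 + 39t)/722 are roots of the equation z(1 − 19 + 19z)² = (1 − 6 + 6z)² (taking k = 2, α = 6, β = 19), and both satisfy |z_1 − 1|_3 ≤ 1/3 and |z_2 − 1|_3 ≤ 1/3, i.e. z_1, z_2 ∈ E_3. -/
/-! Since 61 ≡ 1 (mod 3), Hensel's lemma gives a square root `t` of 61 in `ℤ_3`. The cubic
`z(19z − 18)² − (6z − 5)²` factors as `(z − 1)(361z² − 359z + 25)`, and `z₁, z₂` are the roots of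
the quadratic factor (its discriminant is `39² · 61`). Finally `zᵢ − 1 = 3(−121 ∓ 13t)/722`, where
`t` is integral and `722` is a `3`-adic unit. -/

open Polynomial

theorem PadicInt.exists_sq_eq_of_norm_sub_lt {p : ℕ} [Fact p.Prime] {a b : ℤ_[p]}
    (h : ‖b ^ 2 - a‖ < ‖2 * b‖ ^ 2) : ∃ t : ℤ_[p], t ^ 2 = a := by
  have hnorm : ‖(X ^ 2 - C a).aeval b‖ < ‖(X ^ 2 - C a).derivative.aeval b‖ ^ 2 := by
    simp only [map_sub, map_pow, aeval_X, aeval_C, derivative_X_pow, derivative_C]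
    simpa using h
  obtain ⟨t, ht, -⟩ := hensels_lemma hnorm
  exact ⟨t, by simpa [sub_eq_zero] using ht⟩

theorem Padic.norm_prime_mul_div_le {p : ℕ} [Fact p.Prime] (u : ℤ_[p]) {d : ℤ}
    (hd : IsCoprime d p) : ‖(p : ℚ_[p]) * (u / d)‖ ≤ (p : ℝ)⁻¹ := by
  rw [norm_mul, norm_div, Padic.norm_p, Padic.norm_intCast_eq_one_iff.2 hd, div_one]
  exact mul_le_of_le_one_right (by positivity) u.norm_le_one

theorem exists_padicInt_sq_eq_sixtyOne : ∃ s : ℤ_[3], s ^ 2 = 61 := by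
  refine PadicInt.exists_sq_eq_of_norm_sub_lt (b := 1) ?_
  have h2 : ‖(2 : ℤ_[3])‖ = 1 := by
    simpa using (PadicInt.norm_natCast_eq_one_iff (p := 3) (n := 2)).2 (by norm_num)
  have h60 : ‖((60 : ℕ) : ℤ_[3])‖ < 1 := PadicInt.norm_natCast_lt_one_iff.2 (by norm_num)
  rw [mul_one, h2, one_pow, ← norm_neg]
  norm_num at h60 ⊢
  exact h60

theorem cubic_eq_of_quadratic_eq_zero {R : Type*} [CommRing R] {z : R}
    (h : 361 * z ^ 2 - 359 * z + 25 = 0) :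
    z * (1 - 19 + 19 * z) ^ 2 = (1 - 6 + 6 * z) ^ 2 := by
  linear_combination (z - 1) * h

theorem quadratic_eq_zero_of_sq_eq {K : Type*} [Field K] [CharZero K] {c : K}
    (hc : c ^ 2 = 92781) :
    361 * ((359 + c) / 722) ^ 2 - 359 * ((359 + c) / 722) + 25 = 0 := by
  linear_combination hc / 1444

/-- Example 5.4 (`k = 2`, `p = 3`, `α = 6`, `β = 19`, `γ = 1`): there is `t ∈ ℚ_3` with
`t² = 61`, and `z₁ = (359 − 39t)/722`, `z₂ = (359 + 39t)/722` are roots of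
`z(1 − 19 + 19z)² = (1 − 6 + 6z)²`, both lying in `E_3 = {x : |x − 1|_3 ≤ 1/3}`. -/
theorem padic_example_k_two_alpha_six_beta_nineteen :
    ∃ t : ℚ_[3], t ^ 2 = 61 ∧
      ((359 - 39 * t) / 722) * (1 - 19 + 19 * ((359 - 39 * t) / 722)) ^ 2 =
        (1 - 6 + 6 * ((359 - 39 * t) / 722)) ^ 2 ∧
      ((359 + 39 * t) / 722) * (1 - 19 + 19 * ((359 + 39 * t) / 722)) ^ 2 =
        (1 - 6 + 6 * ((359 + 39 * t) / 722)) ^ 2 ∧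
      ‖(359 - 39 * t) / 722 - 1‖ ≤ 1 / 3 ∧
      ‖(359 + 39 * t) / 722 - 1‖ ≤ 1 / 3 := by
  obtain ⟨s, hs⟩ := exists_padicInt_sq_eq_sixtyOne
  have ht : (s : ℚ_[3]) ^ 2 = 61 := by exact_mod_cast congrArg ((↑) : ℤ_[3] → ℚ_[3]) hs
  have h722 : IsCoprime (722 : ℤ) (3 : ℕ) := by norm_num [Int.isCoprime_iff_gcd_eq_one]
  have hsub := Padic.norm_prime_mul_div_le (((-121 : ℤ) : ℤ_[3]) - ((13 : ℤ) : ℤ_[3]) * s) h722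
  have hadd := Padic.norm_prime_mul_div_le (((-121 : ℤ) : ℤ_[3]) + ((13 : ℤ) : ℤ_[3]) * s) h722
  simp only [PadicInt.coe_add, PadicInt.coe_sub, PadicInt.coe_mul, PadicInt.coe_intCast] at hsub hadd
  have hroot_sub := cubic_eq_of_quadratic_eq_zero
    (quadratic_eq_zero_of_sq_eq (c := -39 * (s : ℚ_[3])) (by linear_combination 1521 * ht))
  rw [neg_mul, ← sub_eq_add_neg] at hroot_sub
  refine ⟨s, ht, hroot_sub,
    cubic_eq_of_quadratic_eq_zero (quadratic_eq_zero_of_sq_eq (by linear_combination 1521 * ht)),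
    ?_, ?_⟩
  · convert hsub using 2 <;> push_cast <;> ring
  · convert hadd using 2 <;> push_cast <;> ring
end

section
/- Let T be a finite tree with vertex set W (with at least one vertex) and edge set E, let q ≥ 1 and let p be a prime. For each edge with endpoints x, y assign Q_{(x,y)}(i,j) ∈ ℚ_p (i,j ∈ {1,…,q}) such that Q_{(x,y)}(i,j) = Q_{(y,x)}(j,i) and Σ_{j=1}^q Q_{(x,y)}(j,i) = 1 for all i. Then Σ_{φ : W → {1,…,q}} ∏_{{x,y} ∈ E} Q_{(x,y)}(φ(x), φ(y)) = q (an identity in ℚ_p). -/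
open Finset

/-- Every finite acyclic graph with at least one edge has a leaf:
a vertex with exactly one neighbor. -/
lemma exists_leaf_aux {V : Type*} [Fintype V] [DecidableEq V] (G : SimpleGraph V)
    (hac : G.IsAcyclic) {a b : V} (hab : G.Adj a b) :
    ∃ x y, G.Adj x y ∧ ∀ w, G.Adj x w → w = y := by
  classical
  obtain ⟨s, -, hmax⟩ := Finset.exists_max_image
      (Finset.univ : Finset (Σ u : V, Σ v : V, G.Path u v))
      (fun s => s.2.2.1.length) ⟨⟨a, b, SimpleGraph.Path.singleton hab⟩, Finset.mem_univ _⟩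
  obtain ⟨u, v, pw, hp⟩ := s
  cases pw with
  | nil =>
    have h1 := hmax ⟨a, b, SimpleGraph.Path.singleton hab⟩ (Finset.mem_univ _)
    simp [SimpleGraph.Path.singleton] at h1
  | cons h' p' =>
    rename_i b'
    refine ⟨u, b', h', fun w hw => ?_⟩
    by_cases hws : w ∈ (SimpleGraph.Walk.cons h' p').support
    · have hwu : w ≠ u := fun h => (G.irrefl) (h ▸ hw)
      set P := SimpleGraph.Walk.cons h' p' with hP
      have htp : (P.takeUntil w hws).IsPath := hp.takeUntil _
      have hnc := hac (SimpleGraph.Walk.cons hw.symm (P.takeUntil w hws))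
      have hmem : s(w, u) ∈ (P.takeUntil w hws).edges := by
        by_contra hne
        exact hnc ((SimpleGraph.Walk.cons_isCycle_iff _ _).mpr ⟨htp, hne⟩)
      have hmem' : s(u, w) ∈ P.edges := by
        apply P.edges_takeUntil_subset hws
        rw [Sym2.eq_swap]; exact hmem
      rw [hP, SimpleGraph.Walk.edges_cons, List.mem_cons] at hmem'
      rcases hmem' with h1 | h2
      · exact Sym2.congr_right.mp h1
      · exact absurd (SimpleGraph.Walk.fst_mem_support_of_mem_edges p' h2)
          ((SimpleGraph.Walk.cons_isPath_iff h' p').mp hp).2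
    · exfalso
      have hp2 : (SimpleGraph.Walk.cons hw.symm (SimpleGraph.Walk.cons h' p')).IsPath :=
        hp.cons hws
      have h1 := hmax ⟨w, v, ⟨_, hp2⟩⟩ (Finset.mem_univ _)
      simp only [SimpleGraph.Walk.length_cons] at h1
      omega

/-- The key induction: for an acyclic graph whose edge set is the finset `E` of
cardinality `k`, the partition function times `q^k` equals `q^(card V)`. -/
lemma forest_partition_aux {V : Type*} [Fintype V] [DecidableEq V]
    (p : ℕ) [Fact p.Prime] (q : ℕ) (hq : 1 ≤ q)
    (Q : V → V → Fin q → Fin q → ℚ_[p])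
    (hsym : ∀ x y : V, ∀ i j : Fin q, Q x y i j = Q y x j i) :
    ∀ (k : ℕ) (G : SimpleGraph V), G.IsAcyclic →
      ∀ (E : Finset (Sym2 V)), (∀ e, e ∈ E ↔ e ∈ G.edgeSet) → E.card = k →
      (∀ x y : V, G.Adj x y → ∀ i : Fin q, ∑ j : Fin q, Q x y j i = 1) →
      (q : ℚ_[p]) ^ k *
        ∑ φ : V → Fin q, ∏ e ∈ E,
          Sym2.lift ⟨fun x y => Q x y (φ x) (φ y),
            fun a b => hsym a b (φ a) (φ b)⟩ e = (q : ℚ_[p]) ^ Fintype.card V := by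
  intro k
  induction k with
  | zero =>
    intro G hac E hE hcard hstoch
    have hEempty : E = ∅ := Finset.card_eq_zero.mp hcard
    subst hEempty
    simp [Finset.sum_const, Fintype.card_fun]
  | succ k ih =>
    intro G hac E hE hcard hstoch
    -- find some edge to get started
    have hne : E.Nonempty := Finset.card_pos.mp (by omega)
    obtain ⟨e0, he0⟩ := hne
    have he0' : e0 ∈ G.edgeSet := (hE e0).mp he0
    obtain ⟨a, b, hab⟩ : ∃ a b, G.Adj a b := by
      induction e0 using Sym2.ind with
      | _ a b => exact ⟨a, b, (SimpleGraph.mem_edgeSet G).mp he0'⟩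
    obtain ⟨x, y, hxy, huniq⟩ := exists_leaf_aux G hac hab
    have hxyE : s(x, y) ∈ E := (hE _).mpr ((SimpleGraph.mem_edgeSet G).mpr hxy)
    -- every edge containing x equals s(x,y)
    have hxE : ∀ e ∈ E, x ∈ e → e = s(x, y) := by
      intro e heE hxe
      induction e using Sym2.ind with
      | _ c d =>
        have hcd : G.Adj c d := (SimpleGraph.mem_edgeSet G).mp ((hE _).mp heE)
        rcases Sym2.mem_iff.mp hxe with h | h
        · subst h; rw [huniq d hcd]
        · subst h
          rw [huniq c hcd.symm, Sym2.eq_swap]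
    set E' := E.erase s(x, y) with hE'def
    set G' := G.deleteEdges {s(x, y)} with hG'def
    have hacc' : G'.IsAcyclic := fun v c hc =>
      hac (c.mapLe (SimpleGraph.deleteEdges_le _)) (hc.mapLe _)
    have hE' : ∀ e, e ∈ E' ↔ e ∈ G'.edgeSet := by
      intro e
      rw [hE'def, hG'def, Finset.mem_erase, SimpleGraph.edgeSet_deleteEdges, Set.mem_diff,
        Set.mem_singleton_iff, hE, and_comm]
    have hcard' : E'.card = k := by
      rw [hE'def, Finset.card_erase_of_mem hxyE, hcard]; rfl
    have hstoch' : ∀ x y : V, G'.Adj x y → ∀ i : Fin q, ∑ j : Fin q, Q x y j i = 1 :=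
      fun x y hxy' i => hstoch x y (SimpleGraph.deleteEdges_le _ hxy') i
    have hxfree : ∀ e ∈ E', x ∉ e := by
      intro e heE' hxe
      have : e = s(x, y) := hxE e (Finset.mem_of_mem_erase heE') hxe
      exact (Finset.ne_of_mem_erase heE') this
    -- abbreviations
    set F : (V → Fin q) → ℚ_[p] := fun φ => ∏ e ∈ E',
        Sym2.lift ⟨fun x y => Q x y (φ x) (φ y), fun a b => hsym a b (φ a) (φ b)⟩ e with hF
    have hFind : ∀ φ ψ : V → Fin q, (∀ v, v ≠ x → φ v = ψ v) → F φ = F ψ := by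
      intro φ ψ hagree
      refine Finset.prod_congr rfl fun e he => ?_
      have hxe := hxfree e he
      induction e using Sym2.ind with
      | _ c d =>
        have hc : c ≠ x := fun h => hxe (by rw [h]; exact Sym2.mem_mk_left x d)
        have hd : d ≠ x := fun h => hxe (by rw [h]; exact Sym2.mem_mk_right c x)
        simp only [Sym2.lift_mk]
        rw [hagree c hc, hagree d hd]
    have hsplit : ∀ φ : V → Fin q,
        (∏ e ∈ E, Sym2.lift ⟨fun x y => Q x y (φ x) (φ y),
          fun a b => hsym a b (φ a) (φ b)⟩ e) = Q x y (φ x) (φ y) * F φ := by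
      intro φ
      rw [← Finset.mul_prod_erase E _ hxyE, Sym2.lift_mk]
    have hyx : y ≠ x := hxy.ne'
    set eq1 := Equiv.funSplitAt x (Fin q) with heq1
    have hsymmx : ∀ (b : Fin q) (ψ : {j // j ≠ x} → Fin q), eq1.symm (b, ψ) x = b := by
      intro b ψ
      simp [heq1, Equiv.funSplitAt, Equiv.piSplitAt]
    have hsymmo : ∀ (b : Fin q) (ψ : {j // j ≠ x} → Fin q) (v : V) (hv : v ≠ x),
        eq1.symm (b, ψ) v = ψ ⟨v, hv⟩ := by
      intro b ψ v hv
      simp [heq1, Equiv.funSplitAt, Equiv.piSplitAt, hv]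
    set i₀ : Fin q := ⟨0, hq⟩ with hi₀
    -- rewrite sums over functions as sums over the splitting
    have hsum1 : ∀ g : (V → Fin q) → ℚ_[p],
        ∑ φ : V → Fin q, g φ
          = ∑ ψ : {j // j ≠ x} → Fin q, ∑ b : Fin q, g (eq1.symm (b, ψ)) := by
      intro g
      rw [← Equiv.sum_comp eq1.symm, Fintype.sum_prod_type]
      exact Finset.sum_comm
    have hS : ∑ φ : V → Fin q, ∏ e ∈ E,
          Sym2.lift ⟨fun x y => Q x y (φ x) (φ y),
            fun a b => hsym a b (φ a) (φ b)⟩ e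
        = ∑ ψ : {j // j ≠ x} → Fin q, F (eq1.symm (i₀, ψ)) := by
      rw [hsum1]
      refine Finset.sum_congr rfl fun ψ _ => ?_
      have hterm : ∀ b : Fin q,
          (∏ e ∈ E, Sym2.lift ⟨fun x y => Q x y ((eq1.symm (b, ψ)) x) ((eq1.symm (b, ψ)) y),
            fun a c => hsym a c _ _⟩ e)
          = Q x y b (ψ ⟨y, hyx⟩) * F (eq1.symm (i₀, ψ)) := by
        intro b
        rw [hsplit, hsymmx, hsymmo b ψ y hyx]
        congr 1
        exact hFind _ _ fun v hv => by rw [hsymmo b ψ v hv, hsymmo i₀ ψ v hv]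
      calc ∑ b : Fin q, ∏ e ∈ E,
            Sym2.lift ⟨fun x y => Q x y ((eq1.symm (b, ψ)) x) ((eq1.symm (b, ψ)) y),
              fun a c => hsym a c _ _⟩ e
          = ∑ b : Fin q, Q x y b (ψ ⟨y, hyx⟩) * F (eq1.symm (i₀, ψ)) := by
            exact Finset.sum_congr rfl fun b _ => hterm b
        _ = (∑ b : Fin q, Q x y b (ψ ⟨y, hyx⟩)) * F (eq1.symm (i₀, ψ)) := by
            rw [Finset.sum_mul]
        _ = F (eq1.symm (i₀, ψ)) := by rw [hstoch x y hxy (ψ ⟨y, hyx⟩), one_mul]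
    have hT : ∑ φ : V → Fin q, F φ
        = (q : ℚ_[p]) * ∑ ψ : {j // j ≠ x} → Fin q, F (eq1.symm (i₀, ψ)) := by
      rw [hsum1 F, Finset.mul_sum]
      refine Finset.sum_congr rfl fun ψ _ => ?_
      have : ∀ b : Fin q, F (eq1.symm (b, ψ)) = F (eq1.symm (i₀, ψ)) := by
        intro b
        exact hFind _ _ fun v hv => by rw [hsymmo b ψ v hv, hsymmo i₀ ψ v hv]
      rw [Finset.sum_congr rfl fun b _ => this b, Finset.sum_const]
      simp [nsmul_eq_mul]
    have hIH := ih G' hacc' E' hE' hcard' hstoch'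
    rw [hS, pow_succ, mul_assoc, ← hT]
    exact hIH

/-- The telescoping identity in the proof of Theorem 6.1: on a finite tree, if each edge
carries a matrix `Q_{(x,y)}(i,j) ∈ ℚ_p` with `Q_{(x,y)}(i,j) = Q_{(y,x)}(j,i)` and
`Σ_{j} Q_{(x,y)}(j,i) = 1` for all `i`, then
`Σ_{φ : W → {1,…,q}} ∏_{{x,y} ∈ E} Q_{(x,y)}(φ(x), φ(y)) = q`. -/
theorem padic_tree_partition_function_eq_q
    {V : Type*} [Fintype V] [DecidableEq V] [Nonempty V]
    (G : SimpleGraph V) [DecidableRel G.Adj] (hT : G.IsTree)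
    (p : ℕ) [Fact p.Prime] (q : ℕ) (hq : 1 ≤ q)
    (Q : V → V → Fin q → Fin q → ℚ_[p])
    (hsym : ∀ x y : V, ∀ i j : Fin q, Q x y i j = Q y x j i)
    (hstoch : ∀ x y : V, G.Adj x y → ∀ i : Fin q, ∑ j : Fin q, Q x y j i = 1) :
    ∑ φ : V → Fin q,
      ∏ e ∈ G.edgeFinset,
        Sym2.lift ⟨fun x y => Q x y (φ x) (φ y),
          fun a b => hsym a b (φ a) (φ b)⟩ e = (q : ℚ_[p]) := by
  have hn : 1 ≤ Fintype.card V := Fintype.card_pos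
  have hcard : G.edgeFinset.card = Fintype.card V - 1 := by
    have := hT.card_edgeFinset; omega
  have key := forest_partition_aux p q hq Q hsym (Fintype.card V - 1) G hT.IsAcyclic
    G.edgeFinset (fun e => SimpleGraph.mem_edgeFinset) hcard hstoch
  have hqne : ((q : ℚ_[p]) ^ (Fintype.card V - 1)) ≠ 0 :=
    pow_ne_zero _ (Nat.cast_ne_zero.mpr (by omega))
  apply mul_left_cancel₀ hqne
  rw [key]
  rw [← pow_succ]
  congr 1
  omega
end

section
/- Let T be a finite tree with vertex set W, |W| ≥ 2, edge set E, let q ≥ 1 and p a prime. For each edge with endpoints x,y let Q_{(x,y)}(i,j) ∈ ℚ_p satisfy Q_{(x,y)}(i,j) = Q_{(y,x)}(j,i), Σ_{j=1}^q Q_{(x,y)}(j,i) = 1 for all i, and |Q_{(x,y)}(i,j)|_p ≤ |q|_p for all i,j. Let ∂Λ ⊆ W be a nonempty set of leaves of T, and for each x ∈ ∂Λ and i ∈ {1,…,q} let z_i(x) ∈ ℚ_p with |z_i(x) − 1|_p ≤ 1/p. Then the normalizing constant Z = Σ_{φ : W → {1,…,q}} (∏_{x ∈ ∂Λ} z_{φ(x)}(x))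 · (∏_{{x,y} ∈ E} Q_{(x,y)}(φ(x), φ(y))) satisfies |Z|_p = |q|_p; in particular Z ≠ 0. -/
section Aux

variable {V : Type*} [Fintype V] [DecidableEq V] {p : ℕ} [Fact p.Prime]

/-- Summing out one coordinate using column-stochasticity. -/
private lemma key_cancel {q : ℕ} (hq : 1 ≤ q) (x w : V) (hxw : w ≠ x)
    (A : (V → Fin q) → ℚ_[p]) (hA : ∀ φ i, A (Function.update φ x i) = A φ)
    (f : Fin q → Fin q → ℚ_[p]) (hf : ∀ j, ∑ i : Fin q, f i j = 1) :
    (q : ℚ_[p]) * ∑ φ : V → Fin q, A φ * f (φ x) (φ w) = ∑ φ : V → Fin q, A φ := by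
  classical
  set e := Equiv.funSplitAt x (Fin q) with he
  set i₀ : Fin q := ⟨0, hq⟩
  have hx' : ∀ (pr : Fin q × ({ j // j ≠ x } → Fin q)), (e.symm pr) x = pr.1 := by
    intro pr; simp [he, Equiv.funSplitAt_symm_apply]
  have hw' : ∀ (pr : Fin q × ({ j // j ≠ x } → Fin q)),
      (e.symm pr) w = pr.2 ⟨w, hxw⟩ := by
    intro pr; simp [he, Equiv.funSplitAt_symm_apply, hxw]
  have hupdate : ∀ (i : Fin q) (ψ : { j // j ≠ x } → Fin q),
      e.symm (i, ψ) = Function.update (e.symm (i₀, ψ)) x i := by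
    intro i ψ; funext j
    by_cases h : j = x
    · subst h; simp [he, Equiv.funSplitAt_symm_apply]
    · simp [he, Equiv.funSplitAt_symm_apply, h, Function.update_of_ne h]
  have hAconst : ∀ (i : Fin q) (ψ : { j // j ≠ x } → Fin q),
      A (e.symm (i, ψ)) = A (e.symm (i₀, ψ)) := by
    intro i ψ; rw [hupdate i ψ, hA]
  have h1 : ∑ φ : V → Fin q, A φ * f (φ x) (φ w)
      = ∑ ψ : { j // j ≠ x } → Fin q, A (e.symm (i₀, ψ)) := by
    rw [← Equiv.sum_comp e.symm (fun φ => A φ * f (φ x) (φ w)),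
      Fintype.sum_prod_type_right]
    refine Finset.sum_congr rfl fun ψ _ => ?_
    calc ∑ i : Fin q, A (e.symm (i, ψ)) * f ((e.symm (i, ψ)) x) ((e.symm (i, ψ)) w)
        = ∑ i : Fin q, A (e.symm (i₀, ψ)) * f i (ψ ⟨w, hxw⟩) := by
          refine Finset.sum_congr rfl fun i _ => ?_
          rw [hAconst, hx', hw']
      _ = A (e.symm (i₀, ψ)) * ∑ i : Fin q, f i (ψ ⟨w, hxw⟩) := by
          rw [Finset.mul_sum]
      _ = A (e.symm (i₀, ψ)) := by rw [hf]; ring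
  have h2 : ∑ φ : V → Fin q, A φ
      = (q : ℚ_[p]) * ∑ ψ : { j // j ≠ x } → Fin q, A (e.symm (i₀, ψ)) := by
    rw [← Equiv.sum_comp e.symm (fun φ => A φ), Fintype.sum_prod_type_right]
    rw [Finset.mul_sum]
    refine Finset.sum_congr rfl fun ψ _ => ?_
    calc ∑ i : Fin q, A (e.symm (i, ψ)) = ∑ _i : Fin q, A (e.symm (i₀, ψ)) := by
          exact Finset.sum_congr rfl fun i _ => hAconst i ψ
      _ = (q : ℚ_[p]) * A (e.symm (i₀, ψ)) := by
          rw [Finset.sum_const, Finset.card_univ, Fintype.card_fin, nsmul_eq_mul]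
  rw [h1, h2]

/-- Telescoping sum over a tree-like oriented structure. -/
private lemma forest_sum {q : ℕ} (hq : 1 ≤ q) (par : V → V) (ρ : V → ℕ)
    (f : V → Fin q → Fin q → ℚ_[p]) (S : Finset V)
    (hρ : ∀ x ∈ S, ρ (par x) < ρ x)
    (hf : ∀ x ∈ S, ∀ j : Fin q, ∑ i : Fin q, f x i j = 1) :
    ∑ φ : V → Fin q, ∏ x ∈ S, f x (φ x) (φ (par x))
      = (q : ℚ_[p]) ^ (Fintype.card V - S.card) := by
  classical
  induction S using Finset.strongInduction with
  | _ S ih =>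
    rcases S.eq_empty_or_nonempty with rfl | hS
    · simp [Finset.card_univ, Fintype.card_fun]
    · obtain ⟨x, hxS, hxmax⟩ := S.exists_max_image ρ hS
      have hparx : par x ≠ x := fun h => absurd (hρ x hxS) (by rw [h]; exact lt_irrefl _)
      set A : (V → Fin q) → ℚ_[p] :=
        fun φ => ∏ y ∈ S.erase x, f y (φ y) (φ (par y)) with hAdef
      have hA : ∀ φ i, A (Function.update φ x i) = A φ := by
        intro φ i
        refine Finset.prod_congr rfl fun y hy => ?_
        have hyx : y ≠ x := Finset.ne_of_mem_erase hy
        have hpy : par y ≠ x := by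
          intro h
          have h1 := hρ y (Finset.mem_of_mem_erase hy)
          rw [h] at h1
          exact absurd (hxmax y (Finset.mem_of_mem_erase hy)) (not_le.mpr h1)
        rw [Function.update_of_ne hyx, Function.update_of_ne hpy]
      have hsplit : ∀ φ : V → Fin q,
          ∏ y ∈ S, f y (φ y) (φ (par y)) = A φ * f x (φ x) (φ (par x)) := by
        intro φ
        exact ((Finset.mul_prod_erase S (fun y => f y (φ y) (φ (par y))) hxS).symm).trans
          (mul_comm _ _)
      have hkey := key_cancel hq x (par x) hparx A hA (f x) (hf x hxS)
      have hih := ih (S.erase x) (Finset.erase_ssubset hxS)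
        (fun y hy => hρ y (Finset.mem_of_mem_erase hy))
        (fun y hy => hf y (Finset.mem_of_mem_erase hy))
      have hcard : S.card ≤ Fintype.card V := Finset.card_le_univ S
      have hpos : 1 ≤ S.card := Finset.card_pos.mpr hS
      have hexp : Fintype.card V - (S.erase x).card
          = (Fintype.card V - S.card) + 1 := by
        rw [Finset.card_erase_of_mem hxS]
        omega
      have hqne : (q : ℚ_[p]) ≠ 0 := by
        exact_mod_cast Nat.cast_ne_zero.mpr (by omega)
      have : (q : ℚ_[p]) * ∑ φ : V → Fin q, ∏ y ∈ S, f y (φ y) (φ (par y))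
          = (q : ℚ_[p]) * (q : ℚ_[p]) ^ (Fintype.card V - S.card) := by
        calc (q : ℚ_[p]) * ∑ φ : V → Fin q, ∏ y ∈ S, f y (φ y) (φ (par y))
            = (q : ℚ_[p]) * ∑ φ : V → Fin q, A φ * f x (φ x) (φ (par x)) := by
              rw [Finset.sum_congr rfl fun φ _ => hsplit φ]
          _ = ∑ φ : V → Fin q, A φ := hkey
          _ = (q : ℚ_[p]) ^ (Fintype.card V - (S.erase x).card) := hih
          _ = (q : ℚ_[p]) * (q : ℚ_[p]) ^ (Fintype.card V - S.card) := by
              rw [hexp, pow_succ, mul_comm]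
      exact mul_left_cancel₀ hqne this

/-- Norm estimate for products of elements close to 1. -/
private lemma prod_close_to_one {q : ℕ} {ε : ℝ} (hε0 : 0 ≤ ε) (hε1 : ε ≤ 1)
    (g : V → ℚ_[p]) (s : Finset V) (hg : ∀ x ∈ s, ‖g x - 1‖ ≤ ε) :
    ‖(∏ x ∈ s, g x) - 1‖ ≤ ε := by
  classical
  induction s using Finset.induction with
  | empty => simpa using hε0
  | @insert a s hx ih =>
    have hga : ‖g a - 1‖ ≤ ε := hg a (Finset.mem_insert_self a s)
    have hP : ‖(∏ x ∈ s, g x) - 1‖ ≤ ε := ih fun x hx => hg x (Finset.mem_insert_of_mem hx)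
    have hnorm_ga : ‖g a‖ ≤ 1 := by
      calc ‖g a‖ = ‖(g a - 1) + 1‖ := by ring_nf
        _ ≤ max ‖g a - 1‖ ‖(1 : ℚ_[p])‖ := IsUltrametricDist.norm_add_le_max _ _
        _ ≤ 1 := by rw [norm_one]; exact max_le (hga.trans hε1) le_rfl
    rw [Finset.prod_insert hx]
    have heq : g a * ∏ x ∈ s, g x - 1
        = g a * ((∏ x ∈ s, g x) - 1) + (g a - 1) := by ring
    rw [heq]
    refine (IsUltrametricDist.norm_add_le_max _ _).trans (max_le ?_ hga)
    rw [norm_mul]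
    calc ‖g a‖ * ‖(∏ x ∈ s, g x) - 1‖ ≤ 1 * ε := by
          exact mul_le_mul hnorm_ga hP (norm_nonneg _) zero_le_one
      _ = ε := one_mul ε

end Aux

/-- The norm of the normalizing constant in the proof of part 1) of Theorem 6.1: on a finite
tree with at least two vertices, with column-stochastic symmetric edge matrices `Q` satisfying
`|Q_{(x,y)}(i,j)|_p ≤ |q|_p`, and boundary values `z_i(x)` at a nonempty set `∂Λ` of leaves
with `|z_i(x) − 1|_p ≤ 1/p`, the normalizing constant
`Z = Σ_{φ : W → {1,…,q}} (∏_{x ∈ ∂Λ} z_{φ(x)}(x)) ∏_{{x,y} ∈ E} Q_{(x,y)}(φ(x), φ(y))`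
satisfies `|Z|_p = |q|_p`; in particular `Z ≠ 0`. -/
theorem padic_tree_normalizing_constant_norm
    {V : Type*} [Fintype V] [DecidableEq V]
    (G : SimpleGraph V) [DecidableRel G.Adj] (hT : G.IsTree)
    (hcard : 2 ≤ Fintype.card V)
    (p : ℕ) [Fact p.Prime] (q : ℕ) (hq : 1 ≤ q)
    (Q : V → V → Fin q → Fin q → ℚ_[p])
    (hsym : ∀ x y : V, ∀ i j : Fin q, Q x y i j = Q y x j i)
    (hstoch : ∀ x y : V, G.Adj x y → ∀ i : Fin q, ∑ j : Fin q, Q x y j i = 1)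
    (hQnorm : ∀ x y : V, G.Adj x y → ∀ i j : Fin q, ‖Q x y i j‖ ≤ ‖(q : ℚ_[p])‖)
    (B : Finset V) (hB : B.Nonempty) (hleaf : ∀ x ∈ B, G.degree x = 1)
    (z : V → Fin q → ℚ_[p]) (hz : ∀ x ∈ B, ∀ i : Fin q, ‖z x i - 1‖ ≤ 1 / (p : ℝ)) :
    ‖∑ φ : V → Fin q,
        (∏ x ∈ B, z x (φ x)) *
          ∏ e ∈ G.edgeFinset,
            Sym2.lift ⟨fun a b => Q a b (φ a) (φ b),
              fun a b => hsym a b (φ a) (φ b)⟩ e‖ = ‖(q : ℚ_[p])‖ ∧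
    (∑ φ : V → Fin q,
        (∏ x ∈ B, z x (φ x)) *
          ∏ e ∈ G.edgeFinset,
            Sym2.lift ⟨fun a b => Q a b (φ a) (φ b),
              fun a b => hsym a b (φ a) (φ b)⟩ e) ≠ 0 := by
  classical
  have hp : Fact p.Prime := inferInstance
  have hconn : G.Connected := hT.isConnected
  have hne : Nonempty V := Fintype.card_pos_iff.mp (by omega)
  obtain ⟨r⟩ := hne
  -- parent map
  have hpar_ex : ∀ x : V, x ≠ r → ∃ y, G.Adj x y ∧ G.dist r y < G.dist r x := by
    intro x hx
    have hd : G.dist x r ≠ 0 := fun h => hx ((hconn.dist_eq_zero_iff).mp h)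
    obtain ⟨w, hw⟩ := (hconn x r).exists_walk_length_eq_dist
    cases w with
    | nil => exact absurd hw.symm (by simpa using hd)
    | @cons _ y _ h w' =>
      refine ⟨y, h, ?_⟩
      have h1 : G.dist r y ≤ w'.length := by
        rw [SimpleGraph.dist_comm]; exact SimpleGraph.dist_le w'
      have h2 : G.dist r x = w'.length + 1 := by
        rw [SimpleGraph.dist_comm]
        simpa [SimpleGraph.Walk.length_cons] using hw.symm
      omega
  set par : V → V := fun x => if h : x = r then r else (hpar_ex x h).choose with hpardef
  have hpar_adj : ∀ x : V, x ≠ r → G.Adj x (par x) := by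
    intro x hx
    simp only [hpardef, dif_neg hx]
    exact (hpar_ex x hx).choose_spec.1
  have hpar_lt : ∀ x : V, x ≠ r → G.dist r (par x) < G.dist r x := by
    intro x hx
    simp only [hpardef, dif_neg hx]
    exact (hpar_ex x hx).choose_spec.2
  set T : Finset V := Finset.univ.erase r with hTdef
  have hmemT : ∀ x ∈ T, x ≠ r := fun x hx => Finset.ne_of_mem_erase hx
  -- the map to edges
  set ι : V → Sym2 V := fun x => s(x, par x) with hιdef
  have hinj : Set.InjOn ι T := by
    intro a ha b hb hab
    simp only [hιdef, Sym2.eq_iff] at hab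
    rcases hab with ⟨h1, _⟩ | ⟨h1, h2⟩
    · exact h1
    · by_contra hne'
      have ha' := hpar_lt a (hmemT a ha)
      have hb' := hpar_lt b (hmemT b hb)
      rw [h2] at ha'
      rw [← h1] at hb'
      omega
  have himage : T.image ι = G.edgeFinset := by
    apply Finset.eq_of_subset_of_card_le
    · intro e he
      obtain ⟨x, hx, rfl⟩ := Finset.mem_image.mp he
      rw [SimpleGraph.mem_edgeFinset]
      exact (hpar_adj x (hmemT x hx))
    · rw [Finset.card_image_of_injOn hinj]
      have h1 : G.edgeFinset.card + 1 = Fintype.card V := hT.card_edgeFinset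
      have h2 : T.card = Fintype.card V - 1 := by
        rw [hTdef, Finset.card_erase_of_mem (Finset.mem_univ r), Finset.card_univ]
      omega
  -- product over edges as product over non-root vertices
  have hprod : ∀ φ : V → Fin q,
      (∏ e ∈ G.edgeFinset,
        Sym2.lift ⟨fun a b => Q a b (φ a) (φ b), fun a b => hsym a b (φ a) (φ b)⟩ e)
      = ∏ x ∈ T, Q x (par x) (φ x) (φ (par x)) := by
    intro φ
    rw [← himage, Finset.prod_image hinj]
    rfl
  -- the main term
  have hmain : ∑ φ : V → Fin q, ∏ x ∈ T, Q x (par x) (φ x) (φ (par x)) = (q : ℚ_[p]) := by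
    have := forest_sum (p := p) hq par (G.dist r) (fun x => Q x (par x)) T
      (fun x hx => hpar_lt x (hmemT x hx))
      (fun x hx j => hstoch x (par x) (hpar_adj x (hmemT x hx)) j)
    have hTcard : T.card = Fintype.card V - 1 := by
      rw [hTdef, Finset.card_erase_of_mem (Finset.mem_univ r), Finset.card_univ]
    rw [this, hTcard]
    have : Fintype.card V - (Fintype.card V - 1) = 1 := by omega
    rw [this, pow_one]
  set Z : ℚ_[p] := ∑ φ : V → Fin q,
      (∏ x ∈ B, z x (φ x)) *
        ∏ e ∈ G.edgeFinset,
          Sym2.lift ⟨fun a b => Q a b (φ a) (φ b),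
            fun a b => hsym a b (φ a) (φ b)⟩ e with hZdef
  set Z₀ : ℚ_[p] := ∑ φ : V → Fin q,
      ∏ e ∈ G.edgeFinset,
        Sym2.lift ⟨fun a b => Q a b (φ a) (φ b),
          fun a b => hsym a b (φ a) (φ b)⟩ e with hZ₀def
  have hZ₀ : Z₀ = (q : ℚ_[p]) := by
    rw [hZ₀def]
    rw [Finset.sum_congr rfl fun φ _ => hprod φ]
    exact hmain
  have hqnorm_le_one : ‖(q : ℚ_[p])‖ ≤ 1 := Padic.norm_int_le_one (q : ℤ)
  have hqne : (q : ℚ_[p]) ≠ 0 := Nat.cast_ne_zero.mpr (by omega)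
  have hqnorm_pos : 0 < ‖(q : ℚ_[p])‖ := norm_pos_iff.mpr hqne
  have hp2 : 2 ≤ p := hp.out.two_le
  have hpinv_lt : 1 / (p : ℝ) < 1 := by
    rw [div_lt_one (by positivity)]
    exact_mod_cast by omega
  have hpinv_nonneg : 0 ≤ 1 / (p : ℝ) := by positivity
  -- bound on edge products
  have hedge_ne : G.edgeFinset.Nonempty := by
    rw [← Finset.card_pos]
    have := hT.card_edgeFinset
    omega
  have hPbound : ∀ φ : V → Fin q,
      ‖∏ e ∈ G.edgeFinset,
        Sym2.lift ⟨fun a b => Q a b (φ a) (φ b), fun a b => hsym a b (φ a) (φ b)⟩ e‖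
        ≤ ‖(q : ℚ_[p])‖ := by
    intro φ
    have hC : ∀ e ∈ G.edgeFinset,
        ‖Sym2.lift ⟨fun a b => Q a b (φ a) (φ b), fun a b => hsym a b (φ a) (φ b)⟩ e‖
          ≤ ‖(q : ℚ_[p])‖ := by
      intro e he
      induction e using Sym2.ind with
      | _ a b =>
        rw [SimpleGraph.mem_edgeFinset, SimpleGraph.mem_edgeSet] at he
        rw [Sym2.lift_mk]
        exact hQnorm a b he (φ a) (φ b)
    have h1le : 1 ≤ G.edgeFinset.card := Finset.card_pos.mpr hedge_ne
    calc ‖∏ e ∈ G.edgeFinset,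
            Sym2.lift ⟨fun a b => Q a b (φ a) (φ b), fun a b => hsym a b (φ a) (φ b)⟩ e‖
        = ∏ e ∈ G.edgeFinset,
            ‖Sym2.lift ⟨fun a b => Q a b (φ a) (φ b), fun a b => hsym a b (φ a) (φ b)⟩ e‖ :=
          norm_prod _ _
      _ ≤ ∏ _e ∈ G.edgeFinset, ‖(q : ℚ_[p])‖ :=
          Finset.prod_le_prod (fun e _ => norm_nonneg _) hC
      _ = ‖(q : ℚ_[p])‖ ^ G.edgeFinset.card := Finset.prod_const _
      _ ≤ ‖(q : ℚ_[p])‖ ^ 1 :=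
          pow_le_pow_of_le_one (norm_nonneg _) hqnorm_le_one h1le
      _ = ‖(q : ℚ_[p])‖ := pow_one _
  -- bound the difference Z - Z₀
  have hdiff : ‖Z - Z₀‖ ≤ (1 / (p : ℝ)) * ‖(q : ℚ_[p])‖ := by
    have : Z - Z₀ = ∑ φ : V → Fin q,
        ((∏ x ∈ B, z x (φ x)) - 1) *
          ∏ e ∈ G.edgeFinset,
            Sym2.lift ⟨fun a b => Q a b (φ a) (φ b),
              fun a b => hsym a b (φ a) (φ b)⟩ e := by
      rw [hZdef, hZ₀def, ← Finset.sum_sub_distrib]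
      refine Finset.sum_congr rfl fun φ _ => ?_
      ring
    rw [this]
    refine IsUltrametricDist.norm_sum_le_of_forall_le_of_nonneg (by positivity) ?_
    intro φ _
    rw [norm_mul]
    refine mul_le_mul ?_ (hPbound φ) (norm_nonneg _) hpinv_nonneg
    exact prod_close_to_one (q := q) hpinv_nonneg hpinv_lt.le _ B (fun x hx => hz x hx (φ x))
  have hdiff_lt : ‖Z - Z₀‖ < ‖(q : ℚ_[p])‖ := by
    calc ‖Z - Z₀‖ ≤ (1 / (p : ℝ)) * ‖(q : ℚ_[p])‖ := hdiff
      _ < 1 * ‖(q : ℚ_[p])‖ := by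
          exact mul_lt_mul_of_pos_right hpinv_lt hqnorm_pos
      _ = ‖(q : ℚ_[p])‖ := one_mul _
  have hZ₀norm : ‖Z₀‖ = ‖(q : ℚ_[p])‖ := by rw [hZ₀]
  have hZnorm : ‖Z‖ = ‖(q : ℚ_[p])‖ := by
    have hne' : ‖Z₀‖ ≠ ‖Z - Z₀‖ := by
      rw [hZ₀norm]; exact (ne_of_lt hdiff_lt).symm
    have := IsUltrametricDist.norm_add_eq_max_of_norm_ne_norm hne'
    rw [add_sub_cancel] at this
    rw [this, hZ₀norm]
    exact max_eq_left hdiff_lt.le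
  refine ⟨hZnorm, fun h0 => ?_⟩
  rw [h0, norm_zero] at hZnorm
  exact hqnorm_pos.ne' hZnorm.symm
end

section
/- Under the hypotheses of the previous setting (finite tree T with vertex set W, |W| ≥ 2, edges E; q ≥ 1; column-stochastic symmetric edge matrices Q with all |Q_{(x,y)}(i,j)|_p ≤ |q|_p; nonempty set of leaves ∂Λ with boundary values |z_i(x) − 1|_p ≤ 1/p; Z = Σ_{φ : W → {1,…,q}} (∏_{x ∈ ∂Λ} z_{φ(x)}(x))(∏_{{x,y} ∈ E} Q_{(x,y)}(φ(x),φ(y)))), for every configuration ς : W → {1,…,q} the normalized weight satisfies |(∏_{x ∈ ∂Λ} z_{ς(x)}(x)) · (∏_{{x,y} ∈ E} Q_{(x,y)}(ς(x),ς(y))) / Z|_p ≤ 1. -/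
/-!
Summing out a leaf `x` with neighbour `y` costs the factor `∑ i, Q x y i j = 1`, so by induction
on the tree the partition function without boundary weights, `Z₀ = ∑ φ, ∏ e, Q_e(φ)`, equals `q`.
Every edge factor has norm at most `|q|_p ≤ 1` and there is at least one edge, so each term of
`Z₀` has norm at most `|q|_p = |Z₀|_p`. The boundary products stay within `1/p < 1` of `1`, hence
`|Z - Z₀|_p < |Z₀|_p` and the ultrametric inequality gives `|Z|_p = |q|_p`, which bounds every
numerator.
-/

open Finset

namespace SimpleGraph

variable {V : Type*} {G : SimpleGraph V}

theorem IsTree.induce_compl_singleton_of_degree_eq_one (hT : G.IsTree) {x : V}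
    [Fintype (G.neighborSet x)] (hx : G.degree x = 1) : (G.induce {x}ᶜ).IsTree :=
  ⟨hT.connected.induce_compl_singleton_of_degree_eq_one hx, hT.isAcyclic.induce _⟩

theorem prod_edgeFinset_eq_mul_prod_induce_compl_singleton [Fintype V] [DecidableEq V]
    [DecidableRel G.Adj] {M : Type*} [CommMonoid M] {x y : V} (hx : G.degree x = 1)
    (hxy : G.Adj x y) (f : Sym2 V → M) :
    ∏ e ∈ G.edgeFinset, f e =
      f s(x, y) * ∏ e ∈ (G.induce {x}ᶜ).edgeFinset, f (e.map Subtype.val) := by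
  have hinc : {e ∈ G.edgeFinset | x ∈ e} = {s(x, y)} := by
    rw [← incidenceFinset_eq_filter]
    refine (eq_of_subset_of_card_le (singleton_subset_iff.2 ?_) ?_).symm
    · exact (mem_incidenceFinset G x _).2 ⟨hxy, Sym2.mem_mk_left x y⟩
    · simp [card_incidenceFinset_eq_degree, hx]
  have hrest : {e ∈ G.edgeFinset | x ∉ e} =
      (G.induce {x}ᶜ).edgeFinset.map (Function.Embedding.subtype _).sym2Map := by
    rw [map_edgeFinset_induce]
    ext e
    induction e using Sym2.ind
    simp only [mem_filter, mem_inter, mem_edgeFinset, mem_edgeSet, Sym2.mem_iff, not_or,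
      mk_mem_sym2_iff, Set.mem_toFinset, Set.mem_compl_singleton_iff, ne_comm]
  rw [← prod_filter_mul_prod_filter_not G.edgeFinset (x ∈ ·), hinc, hrest, prod_singleton,
    prod_map]
  rfl

variable {C R : Type*}

def edgeWeight (w : V → V → C → C → R) (hw : ∀ a b i j, w a b i j = w b a j i) (φ : V → C) :
    Sym2 V → R :=
  Sym2.lift ⟨fun a b => w a b (φ a) (φ b), fun a b => hw a b (φ a) (φ b)⟩

theorem edgeWeight_map_subtypeVal {s : Set V} (w : V → V → C → C → R)
    (hw : ∀ a b i j, w a b i j = w b a j i) (φ : V → C) (e : Sym2 s) :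
    edgeWeight w hw φ (e.map Subtype.val) =
      edgeWeight (fun a b : s => w a b) (fun a b => hw a b) (fun a => φ a) e := by
  induction e using Sym2.ind
  rfl

theorem sum_prod_edgeWeight_eq_sum_prod_induce_compl_singleton [Fintype V] [DecidableEq V]
    [DecidableRel G.Adj] [Fintype C] [CommSemiring R] (w : V → V → C → C → R)
    (hw : ∀ a b i j, w a b i j = w b a j i) {x y : V} (hx : G.degree x = 1) (hxy : G.Adj x y)
    (hstoch : ∀ j, ∑ i, w x y i j = 1) :
    ∑ φ : V → C, ∏ e ∈ G.edgeFinset, edgeWeight w hw φ e =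
      ∑ ψ : ({x}ᶜ : Set V) → C, ∏ e ∈ (G.induce {x}ᶜ).edgeFinset,
        edgeWeight (fun a b : ({x}ᶜ : Set V) => w a b) (fun a b => hw a b) ψ e := by
  have hy : y ∈ ({x}ᶜ : Set V) := hxy.ne.symm
  calc ∑ φ : V → C, ∏ e ∈ G.edgeFinset, edgeWeight w hw φ e
      = ∑ iψ : C × (({x}ᶜ : Set V) → C), w x y iψ.1 (iψ.2 ⟨y, hy⟩) *
          ∏ e ∈ (G.induce {x}ᶜ).edgeFinset,
            edgeWeight (fun a b : ({x}ᶜ : Set V) => w a b) (fun a b => hw a b) iψ.2 e :=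
        Fintype.sum_equiv (Equiv.funSplitAt x C) _ _ fun φ => by
          simp only [prod_edgeFinset_eq_mul_prod_induce_compl_singleton hx hxy,
            edgeWeight_map_subtypeVal]
          rfl
    _ = ∑ ψ : ({x}ᶜ : Set V) → C, (∑ i, w x y i (ψ ⟨y, hy⟩)) *
          ∏ e ∈ (G.induce {x}ᶜ).edgeFinset,
            edgeWeight (fun a b : ({x}ᶜ : Set V) => w a b) (fun a b => hw a b) ψ e := by
        simp only [Fintype.sum_prod_type, sum_mul]
        exact sum_comm
    _ = _ := by simp only [hstoch, one_mul]

theorem IsTree.sum_prod_edgeWeight_eq_card [Fintype V] [DecidableEq V] [DecidableRel G.Adj]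
    [Fintype C] [CommSemiring R] (hT : G.IsTree) (w : V → V → C → C → R)
    (hw : ∀ a b i j, w a b i j = w b a j i)
    (hstoch : ∀ a b, G.Adj a b → ∀ j, ∑ i, w a b i j = 1) :
    ∑ φ : V → C, ∏ e ∈ G.edgeFinset, edgeWeight w hw φ e = Fintype.card C := by
  induction hn : Fintype.card V using Nat.strong_induction_on generalizing V with
  | _ n ih =>
    rcases subsingleton_or_nontrivial V with hV | hV
    · have : Nonempty V := hT.connected.nonempty
      have hE : G.edgeFinset = ∅ := by
        ext e
        induction e using Sym2.ind with | _ a b => simp [Subsingleton.elim a b]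
      simp [hE, Fintype.card_le_one_iff_subsingleton.2 hV |>.antisymm Fintype.card_pos]
    · obtain ⟨x, hx⟩ := hT.exists_vert_degree_one_of_nontrivial
      obtain ⟨y, hxy, -⟩ := degree_eq_one_iff_existsUnique_adj.1 hx
      rw [sum_prod_edgeWeight_eq_sum_prod_induce_compl_singleton w hw hx hxy (hstoch x y hxy)]
      exact ih _ (hn ▸ Fintype.card_subtype_lt (p := (· ∈ ({x}ᶜ : Set V))) (x := x) (by simp))
        (hT.induce_compl_singleton_of_degree_eq_one hx) _ _ (fun a b hab => hstoch a b hab) rfl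

end SimpleGraph

namespace IsUltrametricDist

section NormOneClass

variable {R : Type*} [SeminormedCommRing R] [NormOneClass R] [IsUltrametricDist R]

theorem norm_le_one_of_norm_sub_one_le_one {a : R} (h : ‖a - 1‖ ≤ 1) : ‖a‖ ≤ 1 := by
  simpa using (norm_add_one_le_max_norm_one (a - 1)).trans (max_le h le_rfl)

theorem norm_prod_sub_one_le {ι : Type*} (s : Finset ι) {g : ι → R} {r : ℝ} (hr0 : 0 ≤ r)
    (hr1 : r ≤ 1) (hg : ∀ i ∈ s, ‖g i - 1‖ ≤ r) : ‖∏ i ∈ s, g i - 1‖ ≤ r := by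
  classical
  induction s using Finset.induction_on with
  | empty => simpa using hr0
  | insert a s ha ih =>
    rw [prod_insert ha]
    have hga : ‖g a - 1‖ ≤ r := hg a (mem_insert_self a s)
    have hs : ‖∏ i ∈ s, g i - 1‖ ≤ r := ih fun i hi => hg i (mem_insert_of_mem hi)
    calc ‖g a * ∏ i ∈ s, g i - 1‖ = ‖g a * (∏ i ∈ s, g i - 1) + (g a - 1)‖ := by ring_nf
      _ ≤ max ‖g a * (∏ i ∈ s, g i - 1)‖ ‖g a - 1‖ := norm_add_le_max _ _
      _ ≤ r := by
        refine max_le ?_ hga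
        calc ‖g a * (∏ i ∈ s, g i - 1)‖ ≤ 1 * r := (norm_mul_le _ _).trans <|
              mul_le_mul (norm_le_one_of_norm_sub_one_le_one (hga.trans hr1)) hs
                (norm_nonneg _) zero_le_one
          _ = r := one_mul r

end NormOneClass

section Field

variable {K ι : Type*} [NormedField K] [IsUltrametricDist K] [Fintype ι] {b W : ι → K} {r : ℝ}

theorem norm_sum_mul_eq_norm_sum (hr0 : 0 ≤ r) (hr : r < 1) (hb : ∀ i, ‖b i - 1‖ ≤ r)
    (hW : ∀ i, ‖W i‖ ≤ ‖∑ j, W j‖) : ‖∑ i, b i * W i‖ = ‖∑ i, W i‖ := by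
  have hsplit : ∑ i, b i * W i = ∑ i, W i + ∑ i, (b i - 1) * W i := by
    rw [← sum_add_distrib]
    exact sum_congr rfl fun i _ => by ring
  have hD : ‖∑ i, (b i - 1) * W i‖ ≤ r * ‖∑ j, W j‖ :=
    norm_sum_le_of_forall_le_of_nonneg (by positivity) fun i _ => by
      rw [norm_mul]
      exact mul_le_mul (hb i) (hW i) (norm_nonneg _) hr0
  rw [hsplit]
  rcases (norm_nonneg (∑ j, W j)).eq_or_lt with h0 | hpos
  · have hS : ∑ j, W j = 0 := norm_eq_zero.1 h0.symm
    have hD0 : ∑ i, (b i - 1) * W i = 0 := norm_le_zero_iff.1 (by simpa [hS] using hD)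
    rw [hS, hD0, add_zero]
  · have hlt : ‖∑ i, (b i - 1) * W i‖ < ‖∑ j, W j‖ := hD.trans_lt (mul_lt_of_lt_one_left hpos hr)
    rw [norm_add_eq_max_of_norm_ne_norm hlt.ne', max_eq_left hlt.le]

theorem norm_mul_div_sum_mul_le_one (hr : r < 1) (hb : ∀ i, ‖b i - 1‖ ≤ r)
    (hW : ∀ i, ‖W i‖ ≤ ‖∑ j, W j‖) (k : ι) : ‖b k * W k / ∑ i, b i * W i‖ ≤ 1 := by
  have hr0 : 0 ≤ r := (norm_nonneg _).trans (hb k)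
  rw [norm_div, norm_mul, norm_sum_mul_eq_norm_sum hr0 hr hb hW]
  refine div_le_one_of_le₀ ?_ (norm_nonneg _)
  calc ‖b k‖ * ‖W k‖ ≤ 1 * ‖∑ j, W j‖ :=
        mul_le_mul (norm_le_one_of_norm_sub_one_le_one ((hb k).trans hr.le)) (hW k)
          (norm_nonneg _) zero_le_one
    _ = ‖∑ j, W j‖ := one_mul _

end Field

end IsUltrametricDist

open SimpleGraph IsUltrametricDist

theorem padic_tree_markov_chain_bounded_general
    {V : Type*} [Fintype V] [DecidableEq V]
    (G : SimpleGraph V) [DecidableRel G.Adj] (hT : G.IsTree)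
    (hcard : 2 ≤ Fintype.card V)
    (p : ℕ) [Fact p.Prime] (q : ℕ)
    (Q : V → V → Fin q → Fin q → ℚ_[p])
    (hsym : ∀ x y : V, ∀ i j : Fin q, Q x y i j = Q y x j i)
    (hstoch : ∀ x y : V, G.Adj x y → ∀ i : Fin q, ∑ j : Fin q, Q x y j i = 1)
    (hQnorm : ∀ x y : V, G.Adj x y → ∀ i j : Fin q, ‖Q x y i j‖ ≤ ‖(q : ℚ_[p])‖)
    (B : Finset V)
    (z : V → Fin q → ℚ_[p]) (hz : ∀ x ∈ B, ∀ i : Fin q, ‖z x i - 1‖ ≤ 1 / (p : ℝ)) :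
    ∀ ς : V → Fin q,
      ‖((∏ x ∈ B, z x (ς x)) *
          ∏ e ∈ G.edgeFinset,
            Sym2.lift ⟨fun a b => Q a b (ς a) (ς b),
              fun a b => hsym a b (ς a) (ς b)⟩ e) /
        (∑ φ : V → Fin q,
          (∏ x ∈ B, z x (φ x)) *
            ∏ e ∈ G.edgeFinset,
              Sym2.lift ⟨fun a b => Q a b (φ a) (φ b),
                fun a b => hsym a b (φ a) (φ b)⟩ e)‖ ≤ 1 := by
  have hp : (1 : ℝ) / p < 1 := by
    have : (1 : ℝ) < p := by exact_mod_cast (Fact.out : p.Prime).one_lt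
    exact (div_lt_one (by linarith)).2 this
  have hE : G.edgeFinset.Nonempty := by
    have := hT.card_edgeFinset
    rw [← card_pos]
    omega
  have hZ₀ : ∑ φ : V → Fin q, ∏ e ∈ G.edgeFinset, edgeWeight Q hsym φ e = q := by
    simpa using hT.sum_prod_edgeWeight_eq_card Q hsym hstoch
  have hW : ∀ φ, ‖∏ e ∈ G.edgeFinset, edgeWeight Q hsym φ e‖ ≤ ‖(q : ℚ_[p])‖ := fun φ =>
    calc ‖∏ e ∈ G.edgeFinset, edgeWeight Q hsym φ e‖
        = ∏ e ∈ G.edgeFinset, ‖edgeWeight Q hsym φ e‖ := norm_prod _ _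
      _ ≤ ∏ _e ∈ G.edgeFinset, ‖(q : ℚ_[p])‖ := prod_le_prod (fun _ _ => norm_nonneg _)
          fun e he => by
            induction e using Sym2.ind
            exact hQnorm _ _ (mem_edgeFinset.1 he) _ _
      _ = ‖(q : ℚ_[p])‖ ^ #G.edgeFinset := prod_const _
      _ ≤ ‖(q : ℚ_[p])‖ :=
          pow_le_of_le_one (norm_nonneg _) (norm_natCast_le_one _ q) hE.card_pos.ne'
  intro ς
  exact norm_mul_div_sum_mul_le_one hp
    (fun φ => norm_prod_sub_one_le B (by positivity) hp.le fun x hx => hz x hx (φ x))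
    (fun φ => hZ₀ ▸ hW φ) ς

/-- Part 1) of Theorem 6.1 (boundedness): on a finite tree with at least two vertices, with
column-stochastic symmetric edge matrices `Q` satisfying `|Q_{(x,y)}(i,j)|_p ≤ |q|_p`, and
boundary values `z_i(x)` at a nonempty set `∂Λ` of leaves with `|z_i(x) − 1|_p ≤ 1/p`, every
normalized weight
`(∏_{x ∈ ∂Λ} z_{ς(x)}(x)) (∏_{{x,y} ∈ E} Q_{(x,y)}(ς(x), ς(y))) / Z` has `p`-adic norm at
most `1`, where
`Z = Σ_{φ : W → {1,…,q}} (∏_{x ∈ ∂Λ} z_{φ(x)}(x)) ∏_{{x,y} ∈ E} Q_{(x,y)}(φ(x), φ(y))`. -/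
theorem padic_tree_markov_chain_bounded
    {V : Type*} [Fintype V] [DecidableEq V]
    (G : SimpleGraph V) [DecidableRel G.Adj] (hT : G.IsTree)
    (hcard : 2 ≤ Fintype.card V)
    (p : ℕ) [Fact p.Prime] (q : ℕ) (hq : 1 ≤ q)
    (Q : V → V → Fin q → Fin q → ℚ_[p])
    (hsym : ∀ x y : V, ∀ i j : Fin q, Q x y i j = Q y x j i)
    (hstoch : ∀ x y : V, G.Adj x y → ∀ i : Fin q, ∑ j : Fin q, Q x y j i = 1)
    (hQnorm : ∀ x y : V, G.Adj x y → ∀ i j : Fin q, ‖Q x y i j‖ ≤ ‖(q : ℚ_[p])‖)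
    (B : Finset V) (hB : B.Nonempty) (hleaf : ∀ x ∈ B, G.degree x = 1)
    (z : V → Fin q → ℚ_[p]) (hz : ∀ x ∈ B, ∀ i : Fin q, ‖z x i - 1‖ ≤ 1 / (p : ℝ)) :
    ∀ ς : V → Fin q,
      ‖((∏ x ∈ B, z x (ς x)) *
          ∏ e ∈ G.edgeFinset,
            Sym2.lift ⟨fun a b => Q a b (ς a) (ς b),
              fun a b => hsym a b (ς a) (ς b)⟩ e) /
        (∑ φ : V → Fin q,
          (∏ x ∈ B, z x (φ x)) *
            ∏ e ∈ G.edgeFinset,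
              Sym2.lift ⟨fun a b => Q a b (φ a) (φ b),
                fun a b => hsym a b (φ a) (φ b)⟩ e)‖ ≤ 1 :=
  padic_tree_markov_chain_bounded_general G hT hcard p q Q hsym hstoch hQnorm B z hz
end
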